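/- arXiv:math/0402074 — 14 statements merged into one kernel-verified Lean document; each statement's English description precedes it below -/
import Mathlib

section
/- Let 0<q<1. Then for every k ≥ 0 one has a_{k+1} ≥ q·a_k, and consequently a_k ≥ q^k > 0 for every k ≥ 0. -/
/-- Let `0 < q < 1` and let `(a k)` satisfy `a 0 = 1`,
`2(1-q)a_0 = q⁻¹(1-q²)a_1`, and for `k ≥ 1`,
`2(1-q^{2k+1})a_k = q⁻¹(1-q^{2k+2})a_{k+1} + q(1-q^{2k})a_{k-1}`.
Then for every `k ≥ 0` one has `a_{k+1} ≥ q·a_k`, and consequently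
`a_k ≥ q^k > 0` for every `k ≥ 0`. -/
theorem stmt0 (q : ℝ) (hq0 : 0 < q) (hq1 : q < 1) (a : ℕ → ℝ)
    (ha0 : a 0 = 1)
    (ha1 : 2 * (1 - q) * a 0 = q⁻¹ * (1 - q ^ 2) * a 1)
    (ha : ∀ k : ℕ, 1 ≤ k →
      2 * (1 - q ^ (2 * k + 1)) * a k
        = q⁻¹ * (1 - q ^ (2 * k + 2)) * a (k + 1) + q * (1 - q ^ (2 * k)) * a (k - 1)) :
    (∀ k : ℕ, q * a k ≤ a (k + 1)) ∧ (∀ k : ℕ, q ^ k ≤ a k ∧ 0 < q ^ k) := by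
  have hqne : q ≠ 0 := ne_of_gt hq0
  have key : ∀ k : ℕ, q ^ k ≤ a k ∧ q * a k ≤ a (k + 1) := by
    intro k
    induction k with
    | zero =>
      have h1 : 2 * q * (1 - q) * a 0 = (1 - q ^ 2) * a 1 := by
        have := congrArg (fun x => q * x) ha1
        field_simp at this
        linarith [this]
      rw [ha0] at h1
      refine ⟨by simp [ha0], ?_⟩
      rw [ha0]
      have hpos2 : (0:ℝ) < 1 - q ^ 2 := by nlinarith
      nlinarith [h1, hpos2, mul_nonneg hq0.le (sq_nonneg (1 - q))]
    | succ k ih =>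
      obtain ⟨hk, hk1⟩ := ih
      have hak1 : q ^ (k + 1) ≤ a (k + 1) := by
        calc q ^ (k + 1) = q * q ^ k := by ring
        _ ≤ q * a k := by nlinarith
        _ ≤ a (k + 1) := hk1
      have hak1pos : 0 < a (k + 1) := lt_of_lt_of_le (pow_pos hq0 _) hak1
      refine ⟨hak1, ?_⟩
      have hrec := ha (k + 1) (by omega)
      simp only [Nat.add_sub_cancel] at hrec
      set t : ℝ := q ^ (2 * k + 2) with ht
      have ht0 : 0 < t := pow_pos hq0 _
      have ht1 : t < 1 := pow_lt_one₀ hq0.le hq1 (by omega)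
      have he1 : q ^ (2 * (k + 1) + 1) = q * t := by rw [ht]; ring
      have he2 : q ^ (2 * (k + 1) + 2) = q ^ 2 * t := by rw [ht]; ring
      have he3 : q ^ (2 * (k + 1)) = t := by rw [ht]; ring_nf
      rw [he1, he2, he3] at hrec
      -- multiply through by q to clear q⁻¹
      have heq : 2 * q * (1 - q * t) * a (k + 1)
          = (1 - q ^ 2 * t) * a (k + 2) + q ^ 2 * (1 - t) * a k := by
        have := congrArg (fun x => q * x) hrec
        field_simp at this
        linarith [this]
      -- q^2(1-t) a k ≤ q(1-t) a (k+1)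
      have hstep : q ^ 2 * (1 - t) * a k ≤ q * (1 - t) * a (k + 1) := by
        have h := mul_le_mul_of_nonneg_left hk1
          (mul_nonneg hq0.le (by linarith : (0:ℝ) ≤ 1 - t))
        nlinarith [h]
      have hfac : (1 - q ^ 2 * t) * (a (k + 2) - q * a (k + 1))
          ≥ q * a (k + 1) * t * (1 - q) ^ 2 := by nlinarith [heq, hstep]
      have hpos : 0 < 1 - q ^ 2 * t := by nlinarith
      nlinarith [mul_nonneg (mul_nonneg (mul_nonneg hq0.le hak1pos.le) ht0.le)
        (sq_nonneg (1 - q)), hfac, hpos]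
  refine ⟨fun k => (key k).2, fun k => ⟨(key k).1, pow_pos hq0 k⟩⟩
end

section
/- Let 0<q<1. Then a_k → 0 as k → ∞. -/
/-!
After the substitution `a k = q ^ k * c k` the recurrence reads
`(1 - q^(2k+4)) Δc (k+1) = (1 - q^(2k+2)) Δc k + q^(2k+2) (1-q)² c (k+1)`, so the increments of `c`
stay nonnegative and at most `(1-q)/(1+q)` times `c`. In terms of `a`, the ratio bounds
`q * a k ≤ a (k+1) ≤ 2q/(1+q) * a k`, which hold with equality on the right at `k = 0`,
propagate by induction, and `a k ≤ (2q/(1+q)) ^ k` with `2q/(1+q) < 1`.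
-/

theorem recurrence_increment {q : ℝ} {a : ℕ → ℝ} (hq : q ≠ 0)
    (ha : ∀ k : ℕ, 1 ≤ k →
      2 * (1 - q ^ (2 * k + 1)) * a k
        = q⁻¹ * (1 - q ^ (2 * k + 2)) * a (k + 1) + q * (1 - q ^ (2 * k)) * a (k - 1))
    (k : ℕ) :
    (1 - q ^ (2 * k + 2) * q ^ 2) * (a (k + 2) - q * a (k + 1))
      = q * (1 - q ^ (2 * k + 2)) * (a (k + 1) - q * a k)
        + q * q ^ (2 * k + 2) * (1 - q) ^ 2 * a (k + 1) := by
  have h := ha (k + 1) (by omega)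
  rw [Nat.add_sub_cancel] at h
  linear_combination (-q) * h - (1 - q ^ (2 * k + 4)) * a (k + 2) * mul_inv_cancel₀ hq

theorem ratio_bounds_step {q y u v w : ℝ} (hq0 : 0 < q) (hq1 : q < 1) (hy0 : 0 ≤ y)
    (hy1 : y < 1) (hu : 0 ≤ u) (hlow : q * u ≤ v) (hup : (1 + q) * v ≤ 2 * q * u)
    (hrec : (1 - y * q ^ 2) * (w - q * v) = q * (1 - y) * (v - q * u) + q * y * (1 - q) ^ 2 * v) :
    q * v ≤ w ∧ (1 + q) * w ≤ 2 * q * v := by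
  have hv : 0 ≤ v := le_trans (by positivity) hlow
  have hden : 0 < 1 - y * q ^ 2 := by nlinarith [pow_lt_one₀ hq0.le hq1 two_ne_zero]
  constructor
  · have : 0 ≤ (1 - y * q ^ 2) * (w - q * v) := by
      rw [hrec]
      have : 0 ≤ v - q * u := by linarith
      positivity
    nlinarith
  · -- `(1+q)(v - qu) ≤ (1-q)qu ≤ (1-q)v` bounds the first summand of `hrec`
    have hinc : (1 + q) * (v - q * u) ≤ (1 - q) * v := by nlinarith
    have : (1 - y * q ^ 2) * ((1 + q) * (w - q * v)) ≤ (1 - y * q ^ 2) * (q * (1 - q) * v) := by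
      have : 0 ≤ q * (1 - y) := by nlinarith
      nlinarith [mul_le_mul_of_nonneg_left hinc this]
    nlinarith [le_of_mul_le_mul_left this hden]

theorem ratio_bounds {q : ℝ} {a : ℕ → ℝ} (hq0 : 0 < q) (hq1 : q < 1) (h0 : 0 ≤ a 0)
    (h1 : (1 + q) * a 1 = 2 * q * a 0)
    (ha : ∀ k : ℕ, 1 ≤ k →
      2 * (1 - q ^ (2 * k + 1)) * a k
        = q⁻¹ * (1 - q ^ (2 * k + 2)) * a (k + 1) + q * (1 - q ^ (2 * k)) * a (k - 1))
    (k : ℕ) : 0 ≤ a k ∧ q * a k ≤ a (k + 1) ∧ (1 + q) * a (k + 1) ≤ 2 * q * a k := by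
  induction k with
  | zero =>
    refine ⟨h0, ?_, h1.le⟩
    have : 0 ≤ q * (1 - q) * a 0 := by have := sub_pos.2 hq1; positivity
    nlinarith
  | succ k ih =>
    obtain ⟨hk, hlow, hup⟩ := ih
    exact ⟨le_trans (by positivity) hlow,
      ratio_bounds_step hq0 hq1 (by positivity) (pow_lt_one₀ hq0.le hq1 (by omega)) hk hlow hup
        (recurrence_increment hq0.ne' ha k)⟩

theorem le_geometric_of_ratio_le {ρ : ℝ} {a : ℕ → ℝ} (hρ : ∀ k, a (k + 1) ≤ ρ * a k)
    (hρ0 : 0 ≤ ρ) (k : ℕ) : a k ≤ ρ ^ k * a 0 := by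
  induction k with
  | zero => simp
  | succ k ih =>
    calc a (k + 1) ≤ ρ * a k := hρ k
      _ ≤ ρ * (ρ ^ k * a 0) := mul_le_mul_of_nonneg_left ih hρ0
      _ = ρ ^ (k + 1) * a 0 := by ring

/-- Let `0 < q < 1` and let `(a k)` satisfy the recurrence
`a 0 = 1`, `2(1-q)a_0 = q⁻¹(1-q²)a_1`, and for `k ≥ 1`,
`2(1-q^{2k+1})a_k = q⁻¹(1-q^{2k+2})a_{k+1} + q(1-q^{2k})a_{k-1}`.
Then `a_k → 0` as `k → ∞`. -/
theorem stmt1 (q : ℝ) (hq0 : 0 < q) (hq1 : q < 1) (a : ℕ → ℝ)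
    (ha0 : a 0 = 1)
    (ha1 : 2 * (1 - q) * a 0 = q⁻¹ * (1 - q ^ 2) * a 1)
    (ha : ∀ k : ℕ, 1 ≤ k →
      2 * (1 - q ^ (2 * k + 1)) * a k
        = q⁻¹ * (1 - q ^ (2 * k + 2)) * a (k + 1) + q * (1 - q ^ (2 * k)) * a (k - 1)) :
    Filter.Tendsto a Filter.atTop (nhds 0) := by
  have h1 : (1 + q) * a 1 = 2 * q * a 0 := by
    have : (1 - q) * ((1 + q) * a 1) = (1 - q) * (2 * q * a 0) := by
      linear_combination (-q) * ha1 - (1 - q ^ 2) * a 1 * mul_inv_cancel₀ hq0.ne'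
    exact mul_left_cancel₀ (by linarith) this
  set ρ := 2 * q / (1 + q)
  have hbounds := ratio_bounds hq0 hq1 (by rw [ha0]; exact zero_le_one) h1 ha
  have hρ : ∀ k, a (k + 1) ≤ ρ * a k := fun k => by
    rw [div_mul_eq_mul_div, le_div_iff₀ (by linarith)]
    linarith [(hbounds k).2.2]
  have hρ1 : ρ < 1 := by rw [div_lt_one (by linarith)]; linarith
  have hlim := tendsto_pow_atTop_nhds_zero_of_lt_one (by positivity) hρ1
  refine squeeze_zero (fun k => (hbounds k).1) (fun k => ?_) hlim
  simpa [ha0] using le_geometric_of_ratio_le hρ (by positivity) k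
end

section
/- Let 0<q<1 and let I_{q^2} = {0} ∪ {q^{2k} : k ≥ 0} ⊆ ℝ with the subspace topology. Define f : I_{q^2} → ℝ by f(0) = 0 and f(q^{2k}) = a_k. Then f is continuous on I_{q^2} and f(q^{2k}) > 0 for every k ≥ 0. -/
/-- Let `0 < q < 1`, let `(a k)` satisfy the recurrence of the context, and let
`I_{q²} = {0} ∪ {q^{2k} : k ≥ 0} ⊆ ℝ` with the subspace topology. If `f : ℝ → ℝ` satisfies
`f 0 = 0` and `f (q^{2k}) = a k`, then `f` is continuous on `I_{q²}` and `f (q^{2k}) > 0`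
for every `k ≥ 0`. -/
theorem stmt2 (q : ℝ) (hq0 : 0 < q) (hq1 : q < 1) (a : ℕ → ℝ)
    (ha0 : a 0 = 1)
    (ha1 : 2 * (1 - q) * a 0 = q⁻¹ * (1 - q ^ 2) * a 1)
    (ha : ∀ k : ℕ, 1 ≤ k →
      2 * (1 - q ^ (2 * k + 1)) * a k
        = q⁻¹ * (1 - q ^ (2 * k + 2)) * a (k + 1) + q * (1 - q ^ (2 * k)) * a (k - 1))
    (f : ℝ → ℝ) (hf0 : f 0 = 0) (hfk : ∀ k : ℕ, f (q ^ (2 * k)) = a k) :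
    ContinuousOn f ({0} ∪ {x : ℝ | ∃ k : ℕ, x = q ^ (2 * k)}) ∧
      ∀ k : ℕ, 0 < f (q ^ (2 * k)) := by
  have hqne : q ≠ 0 := hq0.ne'
  have h1q : (0:ℝ) < 1 + q := by linarith
  -- the key joint induction
  have key : ∀ k : ℕ, 0 < a k ∧ q * a k ≤ a (k + 1) ∧ (1 + q) * a (k + 1) ≤ 2 * q * a k := by
    intro k
    induction k with
    | zero =>
      have h1 : a 1 = 2 * q / (1 + q) := by
        rw [ha0] at ha1
        field_simp at ha1 ⊢
        nlinarith [ha1]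
      refine ⟨by rw [ha0]; norm_num, ?_, ?_⟩
      · rw [ha0, h1, mul_one, le_div_iff₀ h1q]
        nlinarith
      · rw [ha0, h1, mul_one, mul_comm (1 + q), div_mul_cancel₀ _ h1q.ne']
      -- (1+q) * (2q/(1+q)) = 2q
    | succ k ih =>
      obtain ⟨hpos, hlo, hhi⟩ := ih
      have hpos' : 0 < a (k + 1) := lt_of_lt_of_le (by positivity) hlo
      set t : ℝ := q ^ (2 * (k + 1)) with ht
      have ht0 : 0 < t := pow_pos hq0 _
      have ht1 : t ≤ 1 := pow_le_one₀ hq0.le hq1.le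
      have hrec := ha (k + 1) (Nat.le_add_left 1 k)
      have e1 : q ^ (2 * (k + 1) + 1) = t * q := by rw [ht, pow_succ]
      have e2 : q ^ (2 * (k + 1) + 2) = t * q * q := by
        rw [ht, pow_succ, pow_succ]
      rw [e1, e2, ← ht, Nat.add_sub_cancel] at hrec
      have h1t : (0:ℝ) ≤ 1 - t := by linarith
      -- multiply through by q to clear q⁻¹
      have heq : a (k + 2) * (1 - t * q * q)
          = 2 * q * (1 - t * q) * a (k + 1) - q * q * (1 - t) * a k := by
        have := congrArg (fun x => q * x) hrec
        field_simp at this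
        linarith
      have hc : 0 < 1 - t * q * q := by nlinarith
      refine ⟨hpos', ?_, ?_⟩
      · -- q * a (k+1) ≤ a (k+2)
        have hIH1m : q * (1 - t) * (q * a k) ≤ q * (1 - t) * a (k + 1) :=
          mul_le_mul_of_nonneg_left hlo (by positivity)
        have hnn2 : 0 ≤ q * a (k + 1) * t * (1 - q) ^ 2 := by positivity
        have hmul : q * a (k + 1) * (1 - t * q * q) ≤ a (k + 2) * (1 - t * q * q) := by
          rw [heq]
          nlinarith [hIH1m, hnn2]
        exact le_of_mul_le_mul_right hmul hc
      · -- (1+q) * a (k+2) ≤ 2q * a (k+1)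
        have hIH2m : q * (1 + q) * (1 - t) * ((1 + q) * a (k + 1))
            ≤ q * (1 + q) * (1 - t) * (2 * q * a k) :=
          mul_le_mul_of_nonneg_left hhi (by positivity)
        have hnn2 : 0 ≤ q * a (k + 1) * (1 - q) ^ 2 * (1 - t) := by positivity
        have hmul : (1 + q) * a (k + 2) * (1 - t * q * q)
            ≤ 2 * q * a (k + 1) * (1 - t * q * q) := by
          nlinarith [hIH2m, hnn2, heq, mul_le_mul_of_nonneg_left heq.le (le_of_lt h1q)]
        exact le_of_mul_le_mul_right hmul hc
  have hapos : ∀ k, 0 < a k := fun k => (key k).1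
  -- upper bound a k ≤ r^k with r = 2q/(1+q) < 1
  set r : ℝ := 2 * q / (1 + q) with hr
  have hr0 : 0 < r := by positivity
  have hr1 : r < 1 := by
    rw [hr, div_lt_one h1q]; linarith
  have haub : ∀ k, a k ≤ r ^ k := by
    intro k
    induction k with
    | zero => simp [ha0]
    | succ k ih =>
      have h1 : a (k + 1) ≤ r * a k := by
        have h2 := (key k).2.2
        rw [hr, div_mul_eq_mul_div, le_div_iff₀ h1q]
        linarith
      calc a (k + 1) ≤ r * a k := h1
        _ ≤ r * r ^ k := mul_le_mul_of_nonneg_left ih hr0.le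
        _ = r ^ (k + 1) := by ring
  constructor
  · -- continuity
    intro x hx
    rcases hx with hx | ⟨k, rfl⟩
    · -- x = 0
      simp only [Set.mem_singleton_iff] at hx
      subst hx
      rw [ContinuousWithinAt, hf0, Metric.tendsto_nhdsWithin_nhds]
      intro ε hε
      obtain ⟨N, hN⟩ := exists_pow_lt_of_lt_one hε hr1
      refine ⟨q ^ (2 * N), by positivity, ?_⟩
      intro y hy hdist
      rcases hy with hy | ⟨j, rfl⟩
      · simp only [Set.mem_singleton_iff] at hy
        subst hy
        rw [Real.dist_eq, hf0, sub_zero, abs_zero]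
        exact hε
      · rw [Real.dist_eq, sub_zero, abs_of_pos (pow_pos hq0 _)] at hdist
        have hjN : 2 * N < 2 * j :=
          (pow_lt_pow_iff_right_of_lt_one₀ hq0 hq1).mp hdist
        have hjN' : N ≤ j := by omega
        rw [Real.dist_eq, sub_zero, hfk j, abs_of_pos (hapos j)]
        calc a j ≤ r ^ j := haub j
          _ ≤ r ^ N := pow_le_pow_of_le_one hr0.le hr1.le hjN'
          _ < ε := hN
    · -- x = q^(2k) : isolated point
      have hmem : q ^ (2 * k) ∈ Set.Ioo (q ^ (2 * k) * q) (q ^ (2 * k) / q) := by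
        constructor
        · nlinarith [pow_pos hq0 (2 * k)]
        · rw [lt_div_iff₀ hq0]
          nlinarith [pow_pos hq0 (2 * k)]
      have hU : Set.Ioo (q ^ (2 * k) * q) (q ^ (2 * k) / q) ∈ nhds (q ^ (2 * k)) :=
        isOpen_Ioo.mem_nhds hmem
      have hev : ∀ᶠ y in nhdsWithin (q ^ (2 * k))
          ({0} ∪ {x : ℝ | ∃ k : ℕ, x = q ^ (2 * k)}), f y = a k := by
        filter_upwards [mem_nhdsWithin_of_mem_nhds hU, self_mem_nhdsWithin] with y hyU hyS
        rcases hyS with hy | ⟨j, rfl⟩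
        · simp only [Set.mem_singleton_iff] at hy
          subst hy
          exfalso
          have := hyU.1
          nlinarith [pow_pos hq0 (2 * k)]
        · obtain ⟨h1, h2⟩ := hyU
          have hub : q ^ (2 * j + 1) < q ^ (2 * k) := by
            rw [lt_div_iff₀ hq0] at h2
            rw [pow_succ]; linarith
          have hlb : q ^ (2 * k + 1) < q ^ (2 * j) := by
            rw [pow_succ]; linarith
          have e1 : 2 * k < 2 * j + 1 :=
            (pow_lt_pow_iff_right_of_lt_one₀ hq0 hq1).mp hub
          have e2 : 2 * j < 2 * k + 1 :=
            (pow_lt_pow_iff_right_of_lt_one₀ hq0 hq1).mp hlb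
          have : j = k := by omega
          rw [this, hfk]
      rw [ContinuousWithinAt, hfk k]
      exact Filter.Tendsto.congr' (hev.mono fun y hy => hy.symm) tendsto_const_nhds
  · intro k
    rw [hfk k]
    exact hapos k
end

section
/- Let 0<q<1. Then the complex power series Σ_{k≥0} a_k z^k has radius of convergence exactly 1/q; in particular it converges for every complex z with |z| < 1/q. -/
set_option maxHeartbeats 1000000 in
/-- Let `0 < q < 1` and let `(a k)` satisfy the recurrence of the context.
Then the complex power series `Σ_{k≥0} a_k z^k` has radius of convergence exactly `1/q`:
it converges (is summable) for every complex `z` with `‖z‖ < 1/q`, and diverges for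
every complex `z` with `‖z‖ > 1/q`. -/
theorem stmt3 (q : ℝ) (hq0 : 0 < q) (hq1 : q < 1) (a : ℕ → ℝ)
    (ha0 : a 0 = 1)
    (ha1 : 2 * (1 - q) * a 0 = q⁻¹ * (1 - q ^ 2) * a 1)
    (ha : ∀ k : ℕ, 1 ≤ k →
      2 * (1 - q ^ (2 * k + 1)) * a k
        = q⁻¹ * (1 - q ^ (2 * k + 2)) * a (k + 1) + q * (1 - q ^ (2 * k)) * a (k - 1)) :
    (∀ z : ℂ, ‖z‖ < 1 / q → Summable (fun k : ℕ => (a k : ℂ) * z ^ k)) ∧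
      (∀ z : ℂ, 1 / q < ‖z‖ → ¬ Summable (fun k : ℕ => (a k : ℂ) * z ^ k)) := by
  have hqne : q ≠ 0 := ne_of_gt hq0
  have h1q : (0:ℝ) < 1 + q := by linarith
  -- inverse-free form of the initial condition: `(1+q) * a 1 = 2*q`
  have h1 : (1 + q) * a 1 = 2 * q := by
    rw [ha0, mul_one] at ha1
    field_simp at ha1
    nlinarith [ha1, sq_nonneg (1 - q)]
  -- inverse-free form of the recurrence
  have ha' : ∀ k : ℕ, 1 ≤ k →
      2 * q * (1 - q ^ (2 * k + 1)) * a k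
        = (1 - q ^ (2 * k + 2)) * a (k + 1) + q ^ 2 * (1 - q ^ (2 * k)) * a (k - 1) := by
    intro k hk
    have h := ha k hk
    field_simp at h
    linarith [h]
  -- Main induction: with `b k = a k / q^k`, the sequence `b` is nondecreasing and grows
  -- at most linearly; the last conjunct is the key quantitative bound on the increments.
  have main : ∀ k : ℕ, 1 ≤ k →
      q ^ k ≤ a k ∧ q * a (k - 1) ≤ a k ∧
      (1 + 2*q) * a k ≤ ((1 + 2*q) + (1 - q^2) * k) * q ^ k ∧
      (1 + 2*q) * (1 - q ^ (2*k)) * (a k - q * a (k - 1)) ≤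
        ((1 - q^2) * (1 - q ^ (2*k)) - (1 - q)^2 * k * q ^ (2*k)) * q ^ k := by
    intro k hk
    induction k, hk using Nat.le_induction with
    | base =>
      simp only [pow_one, Nat.cast_one, Nat.sub_self, ha0]
      refine ⟨?_, ?_, ?_, ?_⟩
      · nlinarith [h1]
      · nlinarith [h1]
      · have : (1+q) * ((1 + 2*q) * a 1) ≤ (1+q) * ((1 + 2*q + (1 - q^2) * 1) * q) := by
          nlinarith [h1, mul_pos (mul_pos hq0 hq0) hq0]
        exact le_of_mul_le_mul_left this h1q
      · have : (1+q) * ((1 + 2*q) * (1 - q ^ (2*1)) * (a 1 - q * 1)) =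
            (1+q) * (((1 - q^2) * (1 - q ^ (2*1)) - (1 - q)^2 * 1 * q ^ (2*1)) * q) := by
          linear_combination ((1 + 2*q) * (1 - q^2)) * h1
        exact le_of_eq (mul_left_cancel₀ (ne_of_gt h1q) this)
    | succ k hk IH =>
      obtain ⟨h0, hi, hii, hiii⟩ := IH
      have hQpos : (0:ℝ) < q ^ (2*k) := pow_pos hq0 _
      have hQlt : q ^ (2*k) < 1 := pow_lt_one₀ hq0.le hq1 (by omega)
      have hQ'lt : q ^ (2*(k+1)) < 1 := pow_lt_one₀ hq0.le hq1 (by omega)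
      have h2 : (0:ℝ) < 1 - q ^ (2*(k+1)) := by linarith
      have hkpos : (0:ℝ) < q ^ k := pow_pos hq0 _
      have key : (1 - q ^ (2*(k+1))) * (a (k+1) - q * a k)
          = q * (1 - q ^ (2*k)) * (a k - q * a (k-1)) + q ^ (2*k+1) * (1-q)^2 * a k := by
        linear_combination (-1 : ℝ) * ha' k hk
      have t1 : q * ((1 + 2*q) * (1 - q ^ (2*k)) * (a k - q * a (k-1)))
          ≤ q * (((1 - q^2) * (1 - q ^ (2*k)) - (1 - q)^2 * k * q ^ (2*k)) * q ^ k) :=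
        mul_le_mul_of_nonneg_left hiii hq0.le
      have t2 : (q ^ (2*k+1) * (1-q)^2) * ((1 + 2*q) * a k)
          ≤ (q ^ (2*k+1) * (1-q)^2) * (((1 + 2*q) + (1 - q^2) * k) * q ^ k) :=
        mul_le_mul_of_nonneg_left hii (by positivity)
      have hiii' : (1 + 2*q) * (1 - q ^ (2*(k+1))) * (a (k+1) - q * a k) ≤
          ((1 - q^2) * (1 - q ^ (2*(k+1))) - (1 - q)^2 * ((k:ℝ)+1) * q ^ (2*(k+1))) * q ^ (k+1) := by
        have e1 : (1 + 2*q) * (1 - q ^ (2*(k+1))) * (a (k+1) - q * a k)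
            = q * ((1 + 2*q) * (1 - q ^ (2*k)) * (a k - q * a (k-1)))
              + (q ^ (2*k+1) * (1-q)^2) * ((1 + 2*q) * a k) := by
          linear_combination (1 + 2*q) * key
        have e2 : q * (((1 - q^2) * (1 - q ^ (2*k)) - (1 - q)^2 * (k:ℝ) * q ^ (2*k)) * q ^ k)
              + (q ^ (2*k+1) * (1-q)^2) * (((1 + 2*q) + (1 - q^2) * (k:ℝ)) * q ^ k)
            = ((1 - q^2) * (1 - q ^ (2*(k+1))) - (1 - q)^2 * ((k:ℝ)+1) * q ^ (2*(k+1))) * q ^ (k+1) := by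
          ring
        rw [e1]
        linarith [t1, t2]
      have hak : 0 ≤ a k := le_trans hkpos.le h0
      have hΔ : 0 ≤ a (k+1) - q * a k := by
        have h3 : 0 ≤ a k - q * a (k-1) := by linarith
        have A : 0 ≤ q * (1 - q ^ (2*k)) * (a k - q * a (k-1)) :=
          mul_nonneg (mul_nonneg hq0.le (by linarith)) h3
        have B : 0 ≤ q ^ (2*k+1) * (1-q)^2 * a k :=
          mul_nonneg (by positivity) hak
        nlinarith [key]
      have hstep : (1 + 2*q) * (a (k+1) - q * a k) ≤ (1 - q^2) * q ^ (k+1) := by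
        have hterm : 0 ≤ (1 - q)^2 * ((k:ℝ)+1) * q ^ (2*(k+1)) * q ^ (k+1) := by positivity
        have hdrop : ((1 + 2*q) * (a (k+1) - q * a k)) * (1 - q ^ (2*(k+1))) ≤
            ((1 - q^2) * q ^ (k+1)) * (1 - q ^ (2*(k+1))) := by nlinarith [hiii']
        exact le_of_mul_le_mul_right hdrop h2
      have hii' : (1 + 2*q) * a (k+1) ≤ ((1 + 2*q) + (1 - q^2) * ((k:ℝ)+1)) * q ^ (k+1) := by
        have t3 : q * ((1 + 2*q) * a k) ≤ q * (((1 + 2*q) + (1 - q^2) * (k:ℝ)) * q ^ k) :=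
          mul_le_mul_of_nonneg_left hii hq0.le
        have e : q * (((1 + 2*q) + (1 - q^2) * (k:ℝ)) * q ^ k) + (1 - q^2) * q ^ (k+1)
            = ((1 + 2*q) + (1 - q^2) * ((k:ℝ)+1)) * q ^ (k+1) := by ring
        nlinarith [t3, hstep]
      refine ⟨?_, ?_, ?_, ?_⟩
      · calc q ^ (k+1) = q * q ^ k := by ring
          _ ≤ q * a k := mul_le_mul_of_nonneg_left h0 hq0.le
          _ ≤ a (k+1) := by linarith
      · simpa using (by linarith : q * a k ≤ a (k+1))
      · push_cast; exact hii'
      · simpa using hiii'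
  -- consequences: `q^k ≤ a k ≤ (k+1) q^k`
  have lower : ∀ k : ℕ, q ^ k ≤ a k := by
    intro k
    rcases Nat.eq_zero_or_pos k with h | h
    · subst h; simp [ha0]
    · exact (main k h).1
  have upper : ∀ k : ℕ, a k ≤ ((k:ℝ) + 1) * q ^ k := by
    intro k
    rcases Nat.eq_zero_or_pos k with h | h
    · subst h; simp [ha0]
    · obtain ⟨-, -, hii, -⟩ := main k h
      have hkpos : (0:ℝ) < q ^ k := pow_pos hq0 _
      have h12 : (0:ℝ) < 1 + 2*q := by linarith
      have : (1 + 2*q) * a k ≤ (1 + 2*q) * (((k:ℝ) + 1) * q ^ k) := by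
        have hknn : (0:ℝ) ≤ (k:ℝ) := Nat.cast_nonneg k
        nlinarith [hii, mul_nonneg hknn hkpos.le, mul_pos hq0 hq0,
          mul_nonneg (mul_nonneg hq0.le hq0.le) (mul_nonneg hknn hkpos.le)]
      exact le_of_mul_le_mul_left this h12
  -- conclusion
  constructor
  · intro z hz
    have hr0 : 0 ≤ q * ‖z‖ := mul_nonneg hq0.le (norm_nonneg z)
    have hr1 : q * ‖z‖ < 1 := by
      have := (lt_div_iff₀ hq0).mp hz
      linarith
    have hsum : Summable (fun k : ℕ => ((k:ℝ) + 1) * (q * ‖z‖) ^ k) := by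
      have hs1 : Summable (fun k : ℕ => (k:ℝ) ^ 1 * (q * ‖z‖) ^ k) :=
        summable_pow_mul_geometric_of_norm_lt_one 1
          (by rwa [Real.norm_eq_abs, abs_of_nonneg hr0])
      have hs2 : Summable (fun k : ℕ => (q * ‖z‖) ^ k) := summable_geometric_of_lt_one hr0 hr1
      simpa [pow_one, add_mul] using hs1.add hs2
    apply Summable.of_norm
    apply Summable.of_nonneg_of_le (fun k => norm_nonneg _) _ hsum
    intro k
    have hak0 : 0 ≤ a k := le_trans (pow_nonneg hq0.le k) (lower k)
    have : ‖(a k : ℂ) * z ^ k‖ = a k * ‖z‖ ^ k := by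
      rw [norm_mul, norm_pow, Complex.norm_real, Real.norm_eq_abs, abs_of_nonneg hak0]
    rw [this, mul_pow, ← mul_assoc]
    exact mul_le_mul_of_nonneg_right (upper k) (pow_nonneg (norm_nonneg z) k)
  · intro z hz hsum
    have hr1 : 1 ≤ q * ‖z‖ := by
      have := (div_lt_iff₀ hq0).mp hz
      nlinarith
    have hten := hsum.tendsto_atTop_zero
    have hnorm : Filter.Tendsto (fun k : ℕ => ‖(a k : ℂ) * z ^ k‖) Filter.atTop (nhds 0) := by
      simpa using hten.norm
    have hev := hnorm.eventually (gt_mem_nhds (by norm_num : (0:ℝ) < 1))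
    obtain ⟨k, hklt⟩ := hev.exists
    have hge : 1 ≤ ‖(a k : ℂ) * z ^ k‖ := by
      have hak0 : 0 ≤ a k := le_trans (pow_nonneg hq0.le k) (lower k)
      have : ‖(a k : ℂ) * z ^ k‖ = a k * ‖z‖ ^ k := by
        rw [norm_mul, norm_pow, Complex.norm_real, Real.norm_eq_abs, abs_of_nonneg hak0]
      rw [this]
      calc (1:ℝ) = 1 ^ k := (one_pow k).symm
        _ ≤ (q * ‖z‖) ^ k := pow_le_pow_left₀ (by norm_num) hr1 k
        _ = q ^ k * ‖z‖ ^ k := mul_pow _ _ _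
        _ ≤ a k * ‖z‖ ^ k := mul_le_mul_of_nonneg_right (lower k) (pow_nonneg (norm_nonneg z) k)
    linarith
end

section
/- Let 0<q<1 and let g(z) = Σ_{k≥0} a_k z^k for complex |z| < 1/q. Then for every complex z with |z| < 1/q one has the functional equation (1−qz)^2 g(z) = (1−q^2 z)^2 g(q^2 z). -/
/-!
Multiplied by `q`, the recurrence says that the second `q`-difference
`a n - 2 q a (n-1) + q² a (n-2)` equals `q^(2n)` times the second difference
`a n - 2 a (n-1) + a (n-2)` (with `a (-1) = a (-2) = 0`). These are the coefficients of `z ^ n` in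
`(1 - qz)² g(z)` and in `(1 - q²z)² g(q²z)` respectively.

For convergence, `c k = a k / q ^ k` is nonnegative and increasing, and its differences satisfy
`Δc (m+1) ≤ Δc m + q^(2m+2) c (m+1)`. Hence `ε c + Δc` eventually grows at most by the factor
`(1 + ε)²`, and the ratio test gives convergence of `Σ c k t ^ k` for every `t < 1`.
-/

open Filter Topology

/-- The coefficients of `(1 - w X) * Σ b n X ^ n`. -/
def backDiff {R : Type*} [Ring R] (w : R) (b : ℕ → R) : ℕ → R
  | 0 => b 0
  | n + 1 => b (n + 1) - w * b n

theorem ofReal_backDiff (w : ℝ) (b : ℕ → ℝ) :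
    backDiff (w : ℂ) (fun k => (b k : ℂ)) = fun k => ((backDiff w b k : ℝ) : ℂ) := by
  funext k
  cases k <;> simp [backDiff]

theorem hasSum_backDiff {b : ℕ → ℂ} {S : ℂ} (w z : ℂ) (h : HasSum (fun n => b n * z ^ n) S) :
    HasSum (fun n => backDiff w b n * z ^ n) ((1 - w * z) * S) := by
  have htail := ((hasSum_nat_add_iff' 1).2 h).sub (h.mul_left (w * z))
  rw [← hasSum_nat_add_iff' 1]
  convert htail using 1
  · funext n
    simp only [backDiff]
    ring
  · simp [backDiff]
    ring

theorem backDiff_backDiff_eq_pow_mul {q : ℝ} (hq : q ≠ 0) {a : ℕ → ℝ}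
    (ha1 : 2 * (1 - q) * a 0 = q⁻¹ * (1 - q ^ 2) * a 1)
    (ha : ∀ k : ℕ, 1 ≤ k →
      2 * (1 - q ^ (2 * k + 1)) * a k
        = q⁻¹ * (1 - q ^ (2 * k + 2)) * a (k + 1) + q * (1 - q ^ (2 * k)) * a (k - 1))
    (n : ℕ) : backDiff q (backDiff q a) n = q ^ (2 * n) * backDiff 1 (backDiff 1 a) n := by
  rcases n with _ | _ | m
  · simp [backDiff]
  · field_simp at ha1
    simp only [backDiff]
    linear_combination -ha1
  · have h := ha (m + 1) (by omega)
    field_simp at h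
    simp only [backDiff, Nat.add_sub_cancel] at h ⊢
    linear_combination -h

theorem summable_mul_pow_of_sub_succ_le {c e : ℕ → ℝ} (hc : ∀ m, 0 ≤ c m ∧ c m ≤ c (m + 1))
    (he : Tendsto e atTop (𝓝 0))
    (hstep : ∀ m, c (m + 2) - c (m + 1) ≤ c (m + 1) - c m + e m * c (m + 1))
    {t : ℝ} (ht0 : 0 ≤ t) (ht1 : t < 1) : Summable fun m => c m * t ^ m := by
  obtain ⟨ε, hε, hρ⟩ : ∃ ε : ℝ, 0 < ε ∧ (1 + ε) ^ 2 * t < 1 :=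
    ⟨(1 - t) / 4, by linarith, by
      nlinarith [mul_nonneg (sub_nonneg.2 ht1.le) ht0, sub_pos.2 ht1,
        mul_nonneg (mul_nonneg (sub_nonneg.2 ht1.le) (sub_nonneg.2 ht1.le)) ht0]⟩
  set s : ℕ → ℝ := fun m => ε * c m + (c (m + 1) - c m) with hs_def
  have hs : ∀ m, 0 ≤ s m := fun m => by nlinarith [hc m]
  have hratio : ∀ᶠ m in atTop, s (m + 1) ≤ (1 + ε) ^ 2 * s m := by
    filter_upwards [he.eventually_le_const (by positivity : (0 : ℝ) < ε ^ 2)] with m hm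
    obtain ⟨hc0, hd0⟩ := hc m
    obtain ⟨hc1, -⟩ := hc (m + 1)
    simp only [hs_def]
    nlinarith [hstep m, mul_le_mul_of_nonneg_right hm hc1, mul_nonneg (pow_pos hε 2).le hc0,
      mul_nonneg (pow_pos hε 3).le hc0, mul_nonneg hε.le (sub_nonneg.2 hd0)]
  have hsum : Summable fun m => s m * t ^ m := by
    refine summable_of_ratio_norm_eventually_le hρ (hratio.mono fun m hm => ?_)
    rw [Real.norm_of_nonneg (mul_nonneg (hs _) (pow_nonneg ht0 _)),
      Real.norm_of_nonneg (mul_nonneg (hs _) (pow_nonneg ht0 _))]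
    calc s (m + 1) * t ^ (m + 1) ≤ (1 + ε) ^ 2 * s m * t ^ (m + 1) := by gcongr
      _ = (1 + ε) ^ 2 * t * (s m * t ^ m) := by ring
  refine (hsum.mul_left ε⁻¹).of_nonneg_of_le (fun m => mul_nonneg (hc m).1 (by positivity))
    fun m => ?_
  rw [← mul_assoc]
  refine mul_le_mul_of_nonneg_right ?_ (by positivity)
  rw [le_inv_mul_iff₀ hε]
  linarith [hc m]

section

variable {q : ℝ} {c : ℕ → ℝ}

theorem nonneg_and_le_succ_of_recurrence (hq0 : 0 ≤ q) (hq1 : q < 1)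
    (hc : ∀ m, (1 - q ^ (2 * m + 4)) * (c (m + 2) - c (m + 1))
      = (1 - q ^ (2 * m + 2)) * (c (m + 1) - c m) + q ^ (2 * m + 2) * (1 - q) ^ 2 * c (m + 1))
    (h0 : 0 ≤ c 0) (h01 : c 0 ≤ c 1) (k : ℕ) : 0 ≤ c k ∧ c k ≤ c (k + 1) := by
  induction k with
  | zero => exact ⟨h0, h01⟩
  | succ m ih =>
    have hc1 : 0 ≤ c (m + 1) := ih.1.trans ih.2
    have hpos : 0 < 1 - q ^ (2 * m + 4) := sub_pos.2 (pow_lt_one₀ hq0 hq1 (by omega))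
    have hnonneg : 0 ≤ 1 - q ^ (2 * m + 2) := sub_nonneg.2 (pow_le_one₀ hq0 hq1.le)
    have hd : 0 ≤ (1 - q ^ (2 * m + 4)) * (c (m + 2) - c (m + 1)) := by
      have := sub_nonneg.2 ih.2
      rw [hc m]
      positivity
    exact ⟨hc1, sub_nonneg.1 ((mul_nonneg_iff_of_pos_left hpos).1 hd)⟩

theorem sub_succ_le_of_recurrence (hq0 : 0 ≤ q) (hq1 : q < 1)
    (hc : ∀ m, (1 - q ^ (2 * m + 4)) * (c (m + 2) - c (m + 1))
      = (1 - q ^ (2 * m + 2)) * (c (m + 1) - c m) + q ^ (2 * m + 2) * (1 - q) ^ 2 * c (m + 1))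
    {m : ℕ} (hc0 : 0 ≤ c m) (hc01 : c m ≤ c (m + 1)) :
    c (m + 2) - c (m + 1) ≤ c (m + 1) - c m + q ^ (2 * m + 2) * c (m + 1) := by
  have hqm : q ^ (2 * m + 4) ≤ q ^ (2 * m + 2) := pow_le_pow_of_le_one hq0 hq1.le (by omega)
  have hq4 : q ^ (2 * m + 4) ≤ q := by
    simpa using pow_le_pow_of_le_one hq0 hq1.le (by omega : 1 ≤ 2 * m + 4)
  have hpos : 0 < 1 - q ^ (2 * m + 4) := sub_pos.2 (pow_lt_one₀ hq0 hq1 (by omega))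
  have hx : 0 ≤ q ^ (2 * m + 2) * c (m + 1) := mul_nonneg (pow_nonneg hq0 _) (hc0.trans hc01)
  -- `(1 - q)² ≤ 1 - q ≤ 1 - q ^ (2m + 4)`
  have hsq : (1 - q) ^ 2 ≤ 1 - q ^ (2 * m + 4) := by nlinarith
  refine le_of_mul_le_mul_left ?_ hpos
  nlinarith [hc m, mul_le_mul_of_nonneg_left hsq hx, mul_nonneg (sub_nonneg.2 hqm) (sub_nonneg.2 hc01)]

end

theorem summable_of_backDiff_eq {q : ℝ} (hq0 : 0 < q) (hq1 : q < 1) {a : ℕ → ℝ} (ha0 : 0 ≤ a 0)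
    (hrec : ∀ n, backDiff q (backDiff q a) n = q ^ (2 * n) * backDiff 1 (backDiff 1 a) n)
    {z : ℂ} (hz : ‖z‖ < 1 / q) : Summable fun k => (a k : ℂ) * z ^ k := by
  set c : ℕ → ℝ := fun k => a k / q ^ k with hc_def
  have hac : ∀ k, a k = q ^ k * c k := fun k => by simp only [hc_def]; field_simp
  have hc : ∀ m, (1 - q ^ (2 * m + 4)) * (c (m + 2) - c (m + 1))
      = (1 - q ^ (2 * m + 2)) * (c (m + 1) - c m) + q ^ (2 * m + 2) * (1 - q) ^ 2 * c (m + 1) := by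
    intro m
    have h := hrec (m + 2)
    simp only [backDiff, hac] at h
    apply mul_left_cancel₀ (pow_ne_zero (m + 2) hq0.ne')
    linear_combination h
  have h01 : c 0 ≤ c 1 := by
    have h := hrec 1
    simp only [backDiff, hac] at h
    have hfactor : (q * (1 - q)) * ((1 + q) * c 1 - 2 * c 0) = 0 := by linear_combination h
    have hc1 := (mul_eq_zero.1 hfactor).resolve_left (by nlinarith)
    nlinarith [hac 0]
  have hmono := nonneg_and_le_succ_of_recurrence hq0.le hq1 hc (by simpa [hc_def] using ha0) h01
  have he : Tendsto (fun m => q ^ (2 * m + 2)) atTop (𝓝 0) :=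
    (tendsto_pow_atTop_nhds_zero_of_lt_one hq0.le hq1).comp
      (tendsto_atTop_mono (fun m => by simp only [id]; omega) tendsto_id)
  have ht : q * ‖z‖ < 1 := by rwa [lt_div_iff₀' hq0] at hz
  refine (summable_mul_pow_of_sub_succ_le hmono he
    (fun m => sub_succ_le_of_recurrence hq0.le hq1 hc (hmono m).1 (hmono m).2)
    (by positivity) ht).of_norm_bounded fun k => le_of_eq ?_
  rw [norm_mul, norm_pow, Complex.norm_real, Real.norm_of_nonneg, hac, mul_pow]
  · ring
  · rw [hac]; exact mul_nonneg (pow_nonneg hq0.le k) (hmono k).1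

/-- Let `0 < q < 1`, let `(a k)` satisfy the recurrence of the context, and let
`g z = Σ_{k≥0} a_k z^k` for complex `‖z‖ < 1/q`. Then for every complex `z` with `‖z‖ < 1/q`
one has the functional equation `(1 - qz)² g(z) = (1 - q²z)² g(q²z)`. -/
theorem stmt4 (q : ℝ) (hq0 : 0 < q) (hq1 : q < 1) (a : ℕ → ℝ)
    (ha0 : a 0 = 1)
    (ha1 : 2 * (1 - q) * a 0 = q⁻¹ * (1 - q ^ 2) * a 1)
    (ha : ∀ k : ℕ, 1 ≤ k →
      2 * (1 - q ^ (2 * k + 1)) * a k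
        = q⁻¹ * (1 - q ^ (2 * k + 2)) * a (k + 1) + q * (1 - q ^ (2 * k)) * a (k - 1)) :
    ∀ z : ℂ, ‖z‖ < 1 / q →
      (1 - (q : ℂ) * z) ^ 2 * ∑' k : ℕ, (a k : ℂ) * z ^ k
        = (1 - (q : ℂ) ^ 2 * z) ^ 2 * ∑' k : ℕ, (a k : ℂ) * ((q : ℂ) ^ 2 * z) ^ k := by
  intro z hz
  have hrec := backDiff_backDiff_eq_pow_mul hq0.ne' ha1 ha
  have hsum {w : ℂ} (hw : ‖w‖ < 1 / q) := summable_of_backDiff_eq hq0 hq1 (ha0 ▸ zero_le_one) hrec hw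
  have hz' : ‖(q : ℂ) ^ 2 * z‖ < 1 / q := by
    refine lt_of_le_of_lt ?_ hz
    rw [norm_mul, norm_pow, Complex.norm_real, Real.norm_of_nonneg hq0.le]
    exact mul_le_of_le_one_left (norm_nonneg z) (pow_le_one₀ hq0.le hq1.le)
  have hL := hasSum_backDiff (q : ℂ) z (hasSum_backDiff (q : ℂ) z (hsum hz).hasSum)
  have hR := hasSum_backDiff ((1 : ℝ) : ℂ) _ (hasSum_backDiff ((1 : ℝ) : ℂ) _ (hsum hz').hasSum)
  simp only [ofReal_backDiff] at hL hR
  rw [Complex.ofReal_one, one_mul] at hR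
  have hcoeff : ∀ n, ((backDiff q (backDiff q a) n : ℝ) : ℂ) * z ^ n
      = ((backDiff 1 (backDiff 1 a) n : ℝ) : ℂ) * ((q : ℂ) ^ 2 * z) ^ n := fun n => by
    rw [hrec n]; push_cast; ring
  simp only [hcoeff] at hL
  linear_combination hL.unique hR
end

section
/- Let 0<q<1. Then for every complex z with |z| < 1/q one has the product formula Σ_{k≥0} a_k z^k = ∏_{j=0}^∞ ((1−q^{2j+2}z)/(1−q^{2j+1}z))^2, where the infinite product converges. -/
/-!
With `F(z) = ∑ aₖ zᵏ`, the recurrence says exactly that `(1 - q z)² F(z) = (1 - q² z)² F(q² z)`.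
Iterating, `F(z) = ∏_{j<n} ((1 - q^{2j+2} z) / (1 - q^{2j+1} z))² · F(q^{2n} z)`, and
`F(q^{2n} z) → F(0) = 1`. The series converges on `|z| < 1/q` because `|aₖ| ≤ C (k+1) qᵏ`:
for `bₖ = aₖ / qᵏ` the differences obey `|b_{k+2} - b_{k+1}| ≤ |b_{k+1} - bₖ| + q^{2k+2} |b_{k+1}|`,
and `∑ (k+2) q^{2k+2} < ∞` keeps `bₖ / (k+1)` bounded.
-/

open Filter Finset Topology

-- The recurrence of the statement, multiplied by `q` and with `k` shifted down by one.
structure IsQRecurrence {R : Type*} [CommRing R] (q : R) (a : ℕ → R) : Prop where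
  one : (1 - q ^ 2) * a 1 = 2 * q * (1 - q) * a 0
  add_two : ∀ k : ℕ, (1 - q ^ (2 * k + 4)) * a (k + 2)
    = 2 * q * (1 - q ^ (2 * k + 3)) * a (k + 1) - q ^ 2 * (1 - q ^ (2 * k + 2)) * a k

theorem IsQRecurrence.map {R S : Type*} [CommRing R] [CommRing S] {q : R} {a : ℕ → R}
    (ha : IsQRecurrence q a) (f : R →+* S) : IsQRecurrence (f q) (f ∘ a) where
  one := by simpa [map_ofNat] using congrArg f ha.one
  add_two k := by simpa [map_ofNat] using congrArg f (ha.add_two k)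

theorem isQRecurrence_of_inv_recurrence {K : Type*} [Field K] {q : K} (hq : q ≠ 0) {a : ℕ → K}
    (ha1 : 2 * (1 - q) * a 0 = q⁻¹ * (1 - q ^ 2) * a 1)
    (ha : ∀ k : ℕ, 1 ≤ k →
      2 * (1 - q ^ (2 * k + 1)) * a k
        = q⁻¹ * (1 - q ^ (2 * k + 2)) * a (k + 1) + q * (1 - q ^ (2 * k)) * a (k - 1)) :
    IsQRecurrence q a where
  one := by
    field_simp at ha1
    linear_combination -ha1
  add_two k := by
    have h := ha (k + 1) le_add_self
    field_simp at h
    simp only [Nat.add_sub_cancel] at h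
    linear_combination -h

section PowerSeries

variable {R : Type*} [CommRing R] [TopologicalSpace R] [IsTopologicalRing R] [T2Space R]

theorem add_mul_add_sq_mul_eq_zero_of_hasSum {x y w : ℕ → R} {u X Y W : R}
    (hX : HasSum (fun k ↦ x k * u ^ k) X) (hY : HasSum (fun k ↦ y k * u ^ k) Y)
    (hW : HasSum (fun k ↦ w k * u ^ k) W) (h0 : x 0 = 0) (h1 : x 1 + y 0 = 0)
    (hrec : ∀ k, x (k + 2) + y (k + 1) + w k = 0) :
    X + u * Y + u ^ 2 * W = 0 := by
  have hX' := (hasSum_nat_add_iff' 2).mpr hX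
  have hY' := ((hasSum_nat_add_iff' 1).mpr hY).mul_left u
  have hsum := (hX'.add hY').add (hW.mul_left (u ^ 2))
  have hzero : (fun k ↦ x (k + 2) * u ^ (k + 2) + u * (y (k + 1) * u ^ (k + 1))
      + u ^ 2 * (w k * u ^ k)) = 0 := by
    funext k
    rw [Pi.zero_apply]
    linear_combination u ^ (k + 2) * hrec k
  rw [hzero] at hsum
  have := hsum.unique hasSum_zero
  simp only [sum_range_succ, sum_range_zero, pow_zero, pow_one, h0] at this
  linear_combination this + u * h1

theorem IsQRecurrence.functional_equation {q : R} {a : ℕ → R} (ha : IsQRecurrence q a) {u : R}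
    (hu : Summable fun k ↦ a k * u ^ k) (hqu : Summable fun k ↦ a k * (q ^ 2 * u) ^ k) :
    (1 - q * u) ^ 2 * ∑' k, a k * u ^ k = (1 - q ^ 2 * u) ^ 2 * ∑' k, a k * (q ^ 2 * u) ^ k := by
  set P := ∑' k, a k * u ^ k
  set Q := ∑' k, a k * (q ^ 2 * u) ^ k
  have hcomb (c : R) (j : ℕ) : HasSum (fun k ↦ c * ((1 - q ^ (2 * k + j)) * a k) * u ^ k)
      (c * (P - q ^ j * Q)) := by
    refine ((hu.hasSum.sub (hqu.hasSum.mul_left (q ^ j))).mul_left c).congr_fun fun k ↦ ?_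
    rw [mul_pow, ← pow_mul]
    ring
  have := add_mul_add_sq_mul_eq_zero_of_hasSum (by simpa using hcomb 1 0) (hcomb (-2 * q) 1)
    (hcomb (q ^ 2) 2) (by simp) (by linear_combination ha.one)
    (fun k ↦ by linear_combination ha.add_two k)
  linear_combination this

end PowerSeries

theorem IsQRecurrence.tsum_eq_prod_mul_tsum {K : Type*} [Field K] [TopologicalSpace K]
    [IsTopologicalRing K] [T2Space K] {q : K} {a : ℕ → K} (ha : IsQRecurrence q a) {z : K}
    (hsum : ∀ n : ℕ, Summable fun k ↦ a k * (q ^ (2 * n) * z) ^ k)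
    (hden : ∀ n : ℕ, 1 - q ^ (2 * n + 1) * z ≠ 0) (n : ℕ) :
    ∑' k, a k * z ^ k = (∏ j ∈ range n, ((1 - q ^ (2 * j + 2) * z) / (1 - q ^ (2 * j + 1) * z)) ^ 2)
      * ∑' k, a k * (q ^ (2 * n) * z) ^ k := by
  induction n with
  | zero => simp
  | succ n ih =>
    have hshift : q ^ 2 * (q ^ (2 * n) * z) = q ^ (2 * (n + 1)) * z := by ring
    have hfe := ha.functional_equation (hsum n) (hshift ▸ hsum (n + 1))
    rw [hshift] at hfe
    have hstep : ∑' k, a k * (q ^ (2 * n) * z) ^ k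
        = ((1 - q ^ (2 * n + 2) * z) / (1 - q ^ (2 * n + 1) * z)) ^ 2
          * ∑' k, a k * (q ^ (2 * (n + 1)) * z) ^ k := by
      rw [div_pow, div_mul_eq_mul_div, eq_div_iff (pow_ne_zero 2 (hden n))]
      linear_combination hfe
    rw [ih, hstep, prod_range_succ, mul_assoc]

theorem tendsto_tsum_mul_pow_of_tendsto_zero {𝕜 ι : Type*} [NormedField 𝕜] [CompleteSpace 𝕜]
    {l : Filter ι} {a : ℕ → 𝕜} {z : 𝕜} {w : ι → 𝕜} (hz : Summable fun k ↦ ‖a k * z ^ k‖)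
    (hw : Tendsto w l (𝓝 0)) (hwz : ∀ i, ‖w i‖ ≤ ‖z‖) :
    Tendsto (fun i ↦ ∑' k, a k * w i ^ k) l (𝓝 (a 0)) := by
  have := tendsto_tsum_of_dominated_convergence hz (fun k ↦ (hw.pow k).const_mul (a k))
    (Eventually.of_forall fun i k ↦ by simp only [norm_mul, norm_pow]; gcongr; exact hwz i)
  rwa [tsum_eq_single 0 fun k hk ↦ by simp [hk], pow_zero, mul_one] at this

section NormedField

variable {𝕜 : Type*} [NontriviallyNormedField 𝕜] [CompleteSpace 𝕜]

theorem multipliable_one_sub_mul_div_one_sub {c : ℕ → 𝕜} (hc : Summable fun j ↦ ‖c j‖) (x : 𝕜) :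
    Multipliable fun j ↦ (1 - x * c j) / (1 - c j) := by
  have hsub : Tendsto (fun w : 𝕜 ↦ 1 - w) (𝓝 0) (𝓝 1) := by
    simpa using (continuous_sub_left (1 : 𝕜)).tendsto 0
  have hO : (fun w : 𝕜 ↦ (1 - x * w) / (1 - w) - 1) =O[𝓝 0] id := by
    have := (Asymptotics.isBigO_const_mul_self (1 - x) id (𝓝 0)).mul
      ((hsub.inv₀ one_ne_zero).isBigO_one 𝕜)
    refine this.congr' ?_ (.of_forall fun w ↦ mul_one w)
    filter_upwards [hsub.eventually_ne one_ne_zero] with w hw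
    simp only [id]
    field_simp
    ring
  simpa using multipliable_one_add_of_summable (hO.comp_summable_norm hc)

theorem multipliable_sq_div_one_sub_pow_mul {q : 𝕜} (hq : ‖q‖ < 1) (z : 𝕜) :
    Multipliable fun j : ℕ ↦ ((1 - q ^ (2 * j + 2) * z) / (1 - q ^ (2 * j + 1) * z)) ^ 2 := by
  have hc : Summable fun j : ℕ ↦ ‖q ^ (2 * j + 1) * z‖ := by
    simp_rw [norm_mul, norm_pow, pow_succ, pow_mul]
    exact ((summable_geometric_of_lt_one (by positivity)
      (pow_lt_one₀ (norm_nonneg q) hq two_ne_zero)).mul_right _).mul_right _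
  convert (multipliable_one_sub_mul_div_one_sub hc q).pow 2 using 4 with j
  ring

theorem IsQRecurrence.tsum_eq_mul_tprod {q z : 𝕜} {a : ℕ → 𝕜} (ha : IsQRecurrence q a)
    (hq : ‖q‖ < 1) (hqz : ‖q * z‖ < 1) (hz : Summable fun k ↦ ‖a k * z ^ k‖) :
    ∑' k, a k * z ^ k
      = a 0 * ∏' j : ℕ, ((1 - q ^ (2 * j + 2) * z) / (1 - q ^ (2 * j + 1) * z)) ^ 2 := by
  have hle (n : ℕ) (w : 𝕜) : ‖q ^ n * w‖ ≤ ‖w‖ := by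
    rw [norm_mul, norm_pow]
    exact mul_le_of_le_one_left (norm_nonneg w) (pow_le_one₀ (norm_nonneg q) hq.le)
  have hsum (n : ℕ) : Summable fun k ↦ a k * (q ^ n * z) ^ k := by
    refine Summable.of_norm <| hz.of_nonneg_of_le (fun _ ↦ norm_nonneg _) fun k ↦ ?_
    rw [norm_mul, norm_mul, norm_pow, norm_pow]
    gcongr
    exact hle n z
  have hden (n : ℕ) : 1 - q ^ (2 * n + 1) * z ≠ 0 := by
    have hlt : ‖q ^ (2 * n + 1) * z‖ < 1 := by
      rw [pow_succ, mul_assoc]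
      exact (hle _ _).trans_lt hqz
    exact sub_ne_zero.mpr fun h ↦ by simp [← h] at hlt
  have hzero : Tendsto (fun n : ℕ ↦ q ^ (2 * n) * z) atTop (𝓝 0) := by
    simpa [pow_mul] using (tendsto_pow_atTop_nhds_zero_of_norm_lt_one
      (by rw [norm_pow]; exact pow_lt_one₀ (norm_nonneg q) hq two_ne_zero)).mul_const z
  have hlim := tendsto_tsum_mul_pow_of_tendsto_zero hz hzero fun n ↦ hle (2 * n) z
  refine tendsto_nhds_unique (l := atTop)
    (tendsto_const_nhds.congr (ha.tsum_eq_prod_mul_tsum (fun n ↦ hsum (2 * n)) hden)) ?_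
  have := (multipliable_sq_div_one_sub_pow_mul hq z).hasProd.tendsto_prod_nat.mul hlim
  rwa [mul_comm] at this

end NormedField

theorem le_mul_prod_of_le_add {B D t : ℕ → ℝ} (ht : ∀ k, 0 ≤ t k) (hB0 : B 0 ≤ 1)
    (hD0 : D 0 ≤ 1) (hB : ∀ k, B (k + 1) ≤ B k + D k)
    (hD : ∀ k, D (k + 1) ≤ D k + t k * B (k + 1)) (k : ℕ) :
    B k ≤ (k + 1) * ∏ j ∈ range k, (1 + (j + 2) * t j) := by
  suffices ∀ k, D k ≤ ∏ j ∈ range k, (1 + (j + 2) * t j) ∧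
      B k ≤ (k + 1) * ∏ j ∈ range k, (1 + (j + 2) * t j) from (this k).2
  intro k
  induction k with
  | zero => simpa using ⟨hD0, hB0⟩
  | succ k ih =>
    set P := ∏ j ∈ range k, (1 + (j + 2) * t j)
    have hP : 0 ≤ P := prod_nonneg fun j _ ↦ by have := ht j; positivity
    have hBk : B (k + 1) ≤ (k + 2) * P := by linarith [hB k, ih.1, ih.2]
    have htB := mul_le_mul_of_nonneg_left hBk (ht k)
    have htP : 0 ≤ (k + 2) * t k * P := by have := ht k; positivity
    rw [prod_range_succ]
    push_cast
    constructor <;> nlinarith [hD k, ih.1]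

theorem summable_add_mul_geometric {r : ℝ} (h0 : 0 ≤ r) (h1 : r < 1) (c : ℝ) :
    Summable fun k : ℕ ↦ (k + c) * r ^ k := by
  have hk := summable_pow_mul_geometric_of_norm_lt_one 1 (by rwa [Real.norm_of_nonneg h0])
  simpa [add_mul] using hk.add ((summable_geometric_of_lt_one h0 h1).mul_left c)

section CoefficientBound

variable {q : ℝ}

theorem abs_sub_le_of_recurrence (hq0 : 0 < q) (hq1 : q < 1) {b : ℕ → ℝ}
    (hrec : ∀ k : ℕ, (1 - q ^ (2 * k + 4)) * b (k + 2)
      = 2 * (1 - q ^ (2 * k + 3)) * b (k + 1) - (1 - q ^ (2 * k + 2)) * b k) (k : ℕ) :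
    |b (k + 2) - b (k + 1)| ≤ |b (k + 1) - b k| + q ^ (2 * k + 2) * |b (k + 1)| := by
  have hlt : q ^ (2 * k + 4) < 1 := pow_lt_one₀ hq0.le hq1 (by omega)
  have hle : q ^ (2 * k + 4) ≤ q ^ (2 * k + 2) := pow_le_pow_of_le_one hq0.le hq1.le (by omega)
  have hleq : q ^ (2 * k + 4) ≤ q := pow_le_of_le_one hq0.le hq1.le (by omega)
  have hpos : 0 ≤ 1 - q ^ (2 * k + 2) := by
    linarith [pow_le_one₀ (n := 2 * k + 2) hq0.le hq1.le]
  refine le_of_mul_le_mul_left ?_ (sub_pos.mpr hlt)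
  calc (1 - q ^ (2 * k + 4)) * |b (k + 2) - b (k + 1)|
      = |(1 - q ^ (2 * k + 2)) * (b (k + 1) - b k)
          + q ^ (2 * k + 2) * (1 - q) ^ 2 * b (k + 1)| := by
        rw [← abs_of_pos (sub_pos.mpr hlt), ← abs_mul]
        congr 1
        linear_combination hrec k
    _ ≤ (1 - q ^ (2 * k + 2)) * |b (k + 1) - b k|
          + q ^ (2 * k + 2) * (1 - q) ^ 2 * |b (k + 1)| := by
        refine (abs_add_le _ _).trans_eq ?_
        rw [abs_mul, abs_mul, abs_of_nonneg hpos,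
          abs_of_nonneg (by positivity : (0 : ℝ) ≤ q ^ (2 * k + 2) * (1 - q) ^ 2)]
    _ ≤ (1 - q ^ (2 * k + 4)) * (|b (k + 1) - b k| + q ^ (2 * k + 2) * |b (k + 1)|) := by
        have : (1 - q) ^ 2 ≤ 1 - q ^ (2 * k + 4) := by nlinarith
        have := mul_le_mul_of_nonneg_left this (by positivity : 0 ≤ q ^ (2 * k + 2) * |b (k + 1)|)
        nlinarith [abs_nonneg (b (k + 1) - b k)]

theorem exists_abs_le_of_recurrence (hq0 : 0 < q) (hq1 : q < 1) {b : ℕ → ℝ} (hb0 : b 0 = 1)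
    (hb1 : (1 - q ^ 2) * b 1 = 2 * (1 - q))
    (hrec : ∀ k : ℕ, (1 - q ^ (2 * k + 4)) * b (k + 2)
      = 2 * (1 - q ^ (2 * k + 3)) * b (k + 1) - (1 - q ^ (2 * k + 2)) * b k) :
    ∃ C, ∀ k : ℕ, |b k| ≤ C * (k + 1) := by
  have hq2 : 0 ≤ q ^ 2 := by positivity
  have hsum : Summable fun j : ℕ ↦ (j + 2) * q ^ (2 * j + 2) := by
    refine ((summable_add_mul_geometric hq2 (by nlinarith) 2).mul_right (q ^ 2)).congr fun j ↦ ?_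
    rw [pow_add, pow_mul]
    ring
  refine ⟨Real.exp (∑' j : ℕ, (j + 2) * q ^ (2 * j + 2)), fun k ↦ ?_⟩
  have hd0 : |b 1 - b 0| ≤ 1 := by
    have hd : (1 - q ^ 2) * (b 1 - b 0) = (1 - q) ^ 2 := by
      linear_combination hb1 - (1 - q ^ 2) * hb0
    have hpos : 0 < 1 - q ^ 2 := by nlinarith
    exact abs_le.mpr ⟨by nlinarith, by nlinarith⟩
  have hgrowth := le_mul_prod_of_le_add (B := fun k ↦ |b k|) (D := fun k ↦ |b (k + 1) - b k|)
    (fun j ↦ by positivity) (by simp [hb0]) hd0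
    (fun k ↦ by linarith [abs_sub_abs_le_abs_sub (b (k + 1)) (b k)])
    (abs_sub_le_of_recurrence hq0 hq1 hrec) k
  refine hgrowth.trans ?_
  rw [mul_comm]
  gcongr
  refine (Real.prod_one_add_le_exp_sum _ fun j ↦ by positivity).trans ?_
  gcongr
  exact hsum.sum_le_tsum _ fun j _ ↦ by positivity

theorem IsQRecurrence.exists_abs_le (hq0 : 0 < q) (hq1 : q < 1) {a : ℕ → ℝ}
    (ha : IsQRecurrence q a) (ha0 : a 0 = 1) : ∃ C, ∀ k : ℕ, |a k| ≤ C * (k + 1) * q ^ k := by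
  have hq : q ≠ 0 := hq0.ne'
  set b : ℕ → ℝ := fun k ↦ a k / q ^ k
  have hab (k : ℕ) : a k = q ^ k * b k := (mul_div_cancel₀ _ (pow_ne_zero k hq)).symm
  have hb1 : (1 - q ^ 2) * b 1 = 2 * (1 - q) := by
    apply mul_left_cancel₀ hq
    linear_combination ha.one - (1 - q ^ 2) * hab 1 + 2 * q * (1 - q) * ha0
  have hbrec (k : ℕ) : (1 - q ^ (2 * k + 4)) * b (k + 2)
      = 2 * (1 - q ^ (2 * k + 3)) * b (k + 1) - (1 - q ^ (2 * k + 2)) * b k := by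
    apply mul_left_cancel₀ (pow_ne_zero (k + 2) hq)
    linear_combination ha.add_two k - (1 - q ^ (2 * k + 4)) * hab (k + 2)
      + 2 * q * (1 - q ^ (2 * k + 3)) * hab (k + 1) - q ^ 2 * (1 - q ^ (2 * k + 2)) * hab k
  obtain ⟨C, hC⟩ := exists_abs_le_of_recurrence hq0 hq1 (by simp [b, ha0]) hb1 hbrec
  refine ⟨C, fun k ↦ ?_⟩
  rw [hab, abs_mul, abs_of_pos (pow_pos hq0 k), mul_comm]
  exact mul_le_mul_of_nonneg_right (hC k) (pow_nonneg hq0.le k)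

theorem IsQRecurrence.summable_norm_mul_pow (hq0 : 0 < q) (hq1 : q < 1) {a : ℕ → ℝ}
    (ha : IsQRecurrence q a) (ha0 : a 0 = 1) {z : ℂ} (hz : q * ‖z‖ < 1) :
    Summable fun k ↦ ‖(a k : ℂ) * z ^ k‖ := by
  obtain ⟨C, hC⟩ := ha.exists_abs_le hq0 hq1 ha0
  refine .of_nonneg_of_le (fun k ↦ norm_nonneg _) (fun k ↦ ?_)
    ((summable_add_mul_geometric (by positivity) hz 1).mul_left C)
  rw [norm_mul, norm_pow, Complex.norm_real, Real.norm_eq_abs, mul_pow, ← mul_assoc, ← mul_assoc]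
  gcongr
  exact hC k

end CoefficientBound

/-- Let `0 < q < 1` and let `(a k)` satisfy the recurrence of the context.
Then for every complex `z` with `‖z‖ < 1/q` one has the product formula
`Σ_{k≥0} a_k z^k = ∏_{j=0}^∞ ((1 - q^{2j+2}z)/(1 - q^{2j+1}z))²`, where the infinite
product converges (is multipliable). -/
theorem stmt5 (q : ℝ) (hq0 : 0 < q) (hq1 : q < 1) (a : ℕ → ℝ)
    (ha0 : a 0 = 1)
    (ha1 : 2 * (1 - q) * a 0 = q⁻¹ * (1 - q ^ 2) * a 1)
    (ha : ∀ k : ℕ, 1 ≤ k →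
      2 * (1 - q ^ (2 * k + 1)) * a k
        = q⁻¹ * (1 - q ^ (2 * k + 2)) * a (k + 1) + q * (1 - q ^ (2 * k)) * a (k - 1)) :
    ∀ z : ℂ, ‖z‖ < 1 / q →
      Multipliable (fun j : ℕ =>
        ((1 - (q : ℂ) ^ (2 * j + 2) * z) / (1 - (q : ℂ) ^ (2 * j + 1) * z)) ^ 2) ∧
      ∑' k : ℕ, (a k : ℂ) * z ^ k
        = ∏' j : ℕ, ((1 - (q : ℂ) ^ (2 * j + 2) * z) / (1 - (q : ℂ) ^ (2 * j + 1) * z)) ^ 2 := by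
  intro z hz
  have hnorm (w : ℂ) : ‖(q : ℂ) * w‖ = q * ‖w‖ := by
    rw [norm_mul, Complex.norm_real, Real.norm_of_nonneg hq0.le]
  have hqz : q * ‖z‖ < 1 := by rwa [lt_div_iff₀' hq0] at hz
  have hq : ‖(q : ℂ)‖ < 1 := by rwa [Complex.norm_real, Real.norm_of_nonneg hq0.le]
  have hrec := isQRecurrence_of_inv_recurrence hq0.ne' ha1 ha
  have hrecC : IsQRecurrence (q : ℂ) (fun k ↦ (a k : ℂ)) := hrec.map Complex.ofRealHom
  refine ⟨multipliable_sq_div_one_sub_pow_mul hq z, ?_⟩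
  simpa [ha0] using hrecC.tsum_eq_mul_tprod hq (by rwa [hnorm])
    (hrec.summable_norm_mul_pow hq0 hq1 ha0 hqz)
end

section
/- Let 0<q<1 and let g(x) = Σ_{k≥0} a_k x^k for real 0 ≤ x < 1/q. Then as x → 1/q from the left, (1−qx)^2 g(x) converges to ∏_{k=0}^∞ ((1−q^{2k+1})/(1−q^{2k+2}))^2. -/
/-!
Write `c n = ∏_{i<n} r i` with `r i = (1 - q^(2i+1))/(1 - q^(2i+2))` and `C(y) = ∑ c n yⁿ`.
The first-order recurrence `(1 - q^(2n+2)) c (n+1) = (1 - q^(2n+1)) c n` says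
`(1 - y) C(y) = (1 - q y) C(q² y)`; squaring, `(1 - y)² C(y)² = (1 - q y)² C(q² y)²`, and comparing
coefficients shows that `qᵏ [yᵏ] C(y)²` satisfies the three-term recurrence of `a k`. Hence
`(1 - q x)² g(x) = ((1 - y) C(y))²` with `y = q x`, and by Abel's theorem `(1 - y) C(y)` tends to
`lim c n = ∏ r k` as `y → 1⁻`.
-/

open Filter Finset Topology PowerSeries

lemma summable_norm_mul_pow_of_tendsto {c : ℕ → ℝ} {l : ℝ} (hc : Tendsto c atTop (𝓝 l)) {x : ℝ}
    (hx : |x| < 1) : Summable fun n => ‖c n * x ^ n‖ := by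
  obtain ⟨C, hC⟩ := isBounded_iff_forall_norm_le.1 (Metric.isBounded_range_of_tendsto c hc)
  refine .of_nonneg_of_le (fun n => norm_nonneg _) (fun n => ?_)
    ((summable_geometric_of_lt_one (abs_nonneg x) hx).mul_left C)
  rw [norm_mul, norm_pow, Real.norm_eq_abs x]
  exact mul_le_mul_of_nonneg_right (hC _ ⟨n, rfl⟩) (by positivity)

theorem tendsto_one_sub_mul_tsum_pow_nhdsLT {c : ℕ → ℝ} {l : ℝ} (hc : Tendsto c atTop (𝓝 l)) :
    Tendsto (fun x => (1 - x) * ∑' n, c n * x ^ n) (𝓝[<] 1) (𝓝 l) := by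
  -- Abel's theorem applied to the difference sequence `d` of `c`, whose partial sums are `c`.
  let d : ℕ → ℝ := fun | 0 => c 0 | n + 1 => c (n + 1) - c n
  have hd : ∀ n, ∑ i ∈ range (n + 1), d i = c n := by
    intro n
    induction n with
    | zero => simp [d]
    | succ n ih => rw [sum_range_succ, ih]; simp [d]
  refine (Real.tendsto_tsum_powerSeries_nhdsWithin_lt (f := d)
    ((tendsto_add_atTop_iff_nat 1).1 (by simpa only [hd] using hc))).congr' ?_
  filter_upwards [Ioo_mem_nhdsLT (show (-1 : ℝ) < 1 by norm_num)] with x hx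
  have hs := (summable_norm_mul_pow_of_tendsto hc (abs_lt.2 hx)).of_norm.hasSum
  set S := ∑' n, c n * x ^ n
  have hshift : HasSum (fun n => d (n + 1) * x ^ (n + 1)) (S - c 0 - x * S) := by
    have h := ((hasSum_nat_add_iff' 1).2 hs).sub (hs.mul_left x)
    rw [sum_range_one, pow_zero, mul_one] at h
    exact h.congr_fun fun n => by simp only [d]; ring
  have h := ((hasSum_nat_add_iff (f := fun n => d n * x ^ n) 1).1 hshift).tsum_eq
  rw [sum_range_one, show d 0 = c 0 from rfl] at h
  rw [h]
  ring

theorem tsum_coeff_mul_mul_pow {R : Type*} [NormedCommRing R] [CompleteSpace R] {f g : R⟦X⟧}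
    {x : R} (hf : Summable fun n => ‖coeff n f * x ^ n‖)
    (hg : Summable fun n => ‖coeff n g * x ^ n‖) :
    ∑' n, coeff n (f * g) * x ^ n = (∑' n, coeff n f * x ^ n) * ∑' n, coeff n g * x ^ n := by
  rw [tsum_mul_tsum_eq_tsum_sum_antidiagonal_of_summable_norm hf hg]
  refine tsum_congr fun n => ?_
  rw [coeff_mul, sum_mul]
  refine sum_congr rfl fun p hp => ?_
  rw [← mem_antidiagonal.1 hp, pow_add]
  ring

namespace QRatio

variable {q : ℝ}

noncomputable def ratio (q : ℝ) (k : ℕ) : ℝ := (1 - q ^ (2 * k + 1)) / (1 - q ^ (2 * k + 2))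

noncomputable def ratioProd (q : ℝ) (n : ℕ) : ℝ := ∏ i ∈ range n, ratio q i

noncomputable def ratioSeries (q : ℝ) : ℝ⟦X⟧ := mk (ratioProd q)

lemma one_sub_pow_ne_zero (hq : |q| < 1) {n : ℕ} (hn : n ≠ 0) : 1 - q ^ n ≠ 0 := by
  have : |q ^ n| < 1 := by rw [abs_pow]; exact pow_lt_one₀ (abs_nonneg q) hq hn
  intro h
  rw [← sub_eq_zero.1 h, abs_one] at this
  exact this.false

lemma one_sub_pow_mul_ratioProd_succ (hq : |q| < 1) (n : ℕ) :
    (1 - q ^ (2 * n + 2)) * ratioProd q (n + 1) = (1 - q ^ (2 * n + 1)) * ratioProd q n := by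
  rw [ratioProd, prod_range_succ, ratio, ← ratioProd]
  field_simp [one_sub_pow_ne_zero hq (n := 2 * n + 2) (by omega)]

lemma one_sub_X_mul_ratioSeries (hq : |q| < 1) :
    (1 - X) * ratioSeries q = (1 - C q * X) * rescale (q ^ 2) (ratioSeries q) := by
  ext (_ | n)
  · simp [ratioSeries, rescale_mk]
  · have := one_sub_pow_mul_ratioProd_succ hq n
    simp only [sub_mul, one_mul, map_sub, coeff_succ_X_mul, mul_assoc, coeff_C_mul, coeff_rescale,
      ratioSeries, coeff_mk]
    linear_combination this

lemma coeff_ratioSeries_sq_rec (hq : |q| < 1) (k : ℕ) :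
    (1 - q ^ (2 * k + 4)) * coeff (k + 2) (ratioSeries q ^ 2)
      + (1 - q ^ (2 * k + 2)) * coeff k (ratioSeries q ^ 2)
      = 2 * (1 - q ^ (2 * k + 3)) * coeff (k + 1) (ratioSeries q ^ 2) := by
  have h := congrArg (coeff (k + 2)) (congrArg (· ^ 2) (one_sub_X_mul_ratioSeries hq))
  simp only [mul_pow, ← map_pow] at h
  set F := ratioSeries q ^ 2
  have e1 : (1 - X : ℝ⟦X⟧) ^ 2 * F = F - C 2 * (X * F) + X * (X * F) := by
    rw [map_ofNat]; ring
  have e2 : (1 - C q * X : ℝ⟦X⟧) ^ 2 * rescale (q ^ 2) F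
      = rescale (q ^ 2) F - C (2 * q) * (X * rescale (q ^ 2) F)
        + C (q ^ 2) * (X * (X * rescale (q ^ 2) F)) := by
    simp only [map_mul, map_pow, map_ofNat]; ring
  rw [e1, e2] at h
  simp only [map_add, map_sub, coeff_C_mul, coeff_succ_X_mul, coeff_rescale] at h
  linear_combination h

lemma coeff_zero_ratioSeries_sq : coeff 0 (ratioSeries q ^ 2) = 1 := by
  simp [sq, ratioSeries, coeff_mul, ratioProd]

lemma coeff_one_ratioSeries_sq : coeff 1 (ratioSeries q ^ 2) = 2 * ratio q 0 := by
  simp [sq, ratioSeries, coeff_mul, ratioProd, Nat.antidiagonal_succ, two_mul]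

theorem eq_pow_mul_coeff_ratioSeries_sq (hq0 : q ≠ 0) (hq : |q| < 1) {a : ℕ → ℝ} (ha0 : a 0 = 1)
    (ha1 : 2 * (1 - q) * a 0 = q⁻¹ * (1 - q ^ 2) * a 1)
    (ha : ∀ k : ℕ, 1 ≤ k →
      2 * (1 - q ^ (2 * k + 1)) * a k
        = q⁻¹ * (1 - q ^ (2 * k + 2)) * a (k + 1) + q * (1 - q ^ (2 * k)) * a (k - 1))
    (k : ℕ) : a k = q ^ k * coeff k (ratioSeries q ^ 2) := by
  have hinv : q * q⁻¹ = 1 := mul_inv_cancel₀ hq0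
  induction k using Nat.twoStepInduction with
  | zero => simp [ha0, coeff_zero_ratioSeries_sq]
  | one =>
    rw [ha0] at ha1
    rw [coeff_one_ratioSeries_sq, ratio]
    field_simp [one_sub_pow_ne_zero hq (n := 2) (by omega)]
    linear_combination -q * ha1 - (1 - q ^ 2) * a 1 * hinv
  | more k ih₀ ih₁ =>
    have hrec := ha (k + 1) (by omega)
    rw [Nat.add_sub_cancel, ih₀, ih₁, show 2 * (k + 1) + 1 = 2 * k + 3 by ring,
      show 2 * (k + 1) + 2 = 2 * k + 4 by ring, show 2 * (k + 1) = 2 * k + 2 by ring] at hrec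
    refine mul_left_cancel₀ (one_sub_pow_ne_zero hq (n := 2 * k + 4) (by omega)) ?_
    linear_combination -q * hrec - q ^ (k + 2) * coeff_ratioSeries_sq_rec hq k
      - (1 - q ^ (2 * k + 4)) * a (k + 2) * hinv

lemma abs_ratio_sub_one_le (hq : |q| < 1) (k : ℕ) :
    |ratio q k - 1| ≤ 2 / (1 - q ^ 2) * (q ^ 2) ^ k := by
  have hq2 : q ^ 2 < 1 := (sq_lt_one_iff_abs_lt_one q).2 hq
  have hden : 1 - q ^ 2 ≤ 1 - q ^ (2 * k + 2) := by
    have : q ^ (2 * k + 2) ≤ q ^ 2 := by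
      rw [pow_add, pow_mul]
      exact mul_le_of_le_one_left (sq_nonneg q) (pow_le_one₀ (sq_nonneg q) hq2.le)
    linarith
  have hnum : |q ^ (2 * k + 1) * (q - 1)| ≤ 2 * (q ^ 2) ^ k := by
    have h1 : |q - 1| ≤ 2 := by rw [abs_le]; constructor <;> linarith [abs_lt.1 hq]
    rw [abs_mul, pow_succ, abs_mul, pow_mul, abs_pow, abs_sq, mul_assoc, mul_comm]
    gcongr
    calc |q| * |q - 1| ≤ 1 * 2 := by gcongr
      _ = 2 := one_mul 2
  have hratio : ratio q k - 1 = q ^ (2 * k + 1) * (q - 1) / (1 - q ^ (2 * k + 2)) := by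
    rw [ratio, div_sub_one (one_sub_pow_ne_zero hq (by omega))]
    ring
  rw [hratio, abs_div, abs_of_pos (a := 1 - q ^ (2 * k + 2)) (by linarith), div_mul_eq_mul_div,
    div_le_div_iff₀ (by linarith) (by linarith)]
  gcongr

lemma multipliable_ratio (hq : |q| < 1) : Multipliable (ratio q) := by
  have hq2 : q ^ 2 < 1 := (sq_lt_one_iff_abs_lt_one q).2 hq
  have hsum : Summable fun k => ratio q k - 1 :=
    .of_norm_bounded ((summable_geometric_of_lt_one (sq_nonneg q) hq2).mul_left _)
      (abs_ratio_sub_one_le hq)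
  simpa using Real.multipliable_one_add_of_summable hsum

lemma tendsto_ratioProd (hq : |q| < 1) :
    Tendsto (ratioProd q) atTop (𝓝 (∏' k, ratio q k)) :=
  (multipliable_ratio hq).hasProd.tendsto_prod_nat

theorem tsum_eq_sq_tsum_ratioProd (hq0 : q ≠ 0) (hq : |q| < 1) {a : ℕ → ℝ} (ha0 : a 0 = 1)
    (ha1 : 2 * (1 - q) * a 0 = q⁻¹ * (1 - q ^ 2) * a 1)
    (ha : ∀ k : ℕ, 1 ≤ k →
      2 * (1 - q ^ (2 * k + 1)) * a k
        = q⁻¹ * (1 - q ^ (2 * k + 2)) * a (k + 1) + q * (1 - q ^ (2 * k)) * a (k - 1))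
    {x : ℝ} (hx : |q * x| < 1) :
    ∑' k, a k * x ^ k = (∑' n, ratioProd q n * (q * x) ^ n) ^ 2 := by
  have hsum : Summable fun n => ‖coeff n (ratioSeries q) * (q * x) ^ n‖ := by
    simpa only [ratioSeries, coeff_mk] using
      summable_norm_mul_pow_of_tendsto (tendsto_ratioProd hq) hx
  calc ∑' k, a k * x ^ k = ∑' k, coeff k (ratioSeries q * ratioSeries q) * (q * x) ^ k := by
        refine tsum_congr fun k => ?_
        rw [eq_pow_mul_coeff_ratioSeries_sq hq0 hq ha0 ha1 ha, mul_pow, sq]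
        ring
    _ = (∑' n, ratioProd q n * (q * x) ^ n) ^ 2 := by
        rw [tsum_coeff_mul_mul_pow hsum hsum, ← sq]
        simp only [ratioSeries, coeff_mk]

end QRatio

open QRatio in
/-- Let `0 < q < 1`, let `(a k)` satisfy the recurrence of the context, and let
`g x = Σ_{k≥0} a_k x^k` for real `0 ≤ x < 1/q`. Then as `x → 1/q` from the left (within
`[0, 1/q)`), `(1 - qx)² g(x)` converges to `∏_{k=0}^∞ ((1 - q^{2k+1})/(1 - q^{2k+2}))²`
(a convergent infinite product). -/
theorem stmt6 (q : ℝ) (hq0 : 0 < q) (hq1 : q < 1) (a : ℕ → ℝ)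
    (ha0 : a 0 = 1)
    (ha1 : 2 * (1 - q) * a 0 = q⁻¹ * (1 - q ^ 2) * a 1)
    (ha : ∀ k : ℕ, 1 ≤ k →
      2 * (1 - q ^ (2 * k + 1)) * a k
        = q⁻¹ * (1 - q ^ (2 * k + 2)) * a (k + 1) + q * (1 - q ^ (2 * k)) * a (k - 1)) :
    Multipliable (fun k : ℕ => ((1 - q ^ (2 * k + 1)) / (1 - q ^ (2 * k + 2))) ^ 2) ∧
      Filter.Tendsto (fun x : ℝ => (1 - q * x) ^ 2 * ∑' k : ℕ, a k * x ^ k)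
        (nhdsWithin (1 / q) (Set.Ico 0 (1 / q)))
        (nhds (∏' k : ℕ, ((1 - q ^ (2 * k + 1)) / (1 - q ^ (2 * k + 2))) ^ 2)) := by
  have hq : |q| < 1 := abs_lt.2 ⟨by linarith, hq1⟩
  have hprod : HasProd (fun k => ratio q k ^ 2) ((∏' k, ratio q k) ^ 2) :=
    (multipliable_ratio hq).hasProd.pow 2
  refine ⟨hprod.multipliable, ?_⟩
  change Tendsto _ _ (𝓝 (∏' k, ratio q k ^ 2))
  rw [hprod.tprod_eq]
  have hmul : Tendsto (q * ·) (𝓝[Set.Ico 0 (1 / q)] (1 / q)) (𝓝[<] 1) := by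
    refine tendsto_nhdsWithin_iff.2 ⟨?_, ?_⟩
    · exact ((continuous_const_mul q).tendsto' _ _ (mul_one_div_cancel hq0.ne')).mono_left
        nhdsWithin_le_nhds
    · filter_upwards [self_mem_nhdsWithin] with x hx
      exact (lt_div_iff₀' hq0).1 (one_div q ▸ hx.2)
  refine (((tendsto_one_sub_mul_tsum_pow_nhdsLT (tendsto_ratioProd hq)).comp hmul).pow 2).congr' ?_
  filter_upwards [self_mem_nhdsWithin] with x ⟨hx0, hx1⟩
  have hqx : |q * x| < 1 := by
    rw [abs_of_nonneg (by positivity)]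
    exact (lt_div_iff₀' hq0).1 (one_div q ▸ hx1)
  rw [Function.comp_apply, tsum_eq_sq_tsum_ratioProd hq0.ne' hq ha0 ha1 ha hqx, mul_pow]
end

section
/- Let 0<q<1, let p be the transition function defined in the context, and let (a_k)_{k≥0} be the sequence defined in the context. Then a is a strictly positive eigenfunction of the Markov operator of p with eigenvalue λ = 2/(q+q^{−1}) < 1: for every k ≥ 0, Σ_j p(k,j) a_j = (2/(q+q^{−1})) a_k, and a_k > 0 for all k. -/
/-!
Since `p` only moves to nearest neighbours, the eigenvalue equation at `k` is the defining
recurrence of `a` at `k` divided by `q + q⁻¹` (at `k = 0` it is the initial condition), and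
`2 / (q + q⁻¹) < 1` is `q + q⁻¹ > 2`. For positivity, the recurrence gives
`(1 - q^(2k+2)) (a (k+1) - q a k) = q (1 - q^(2k)) (a k - q a (k-1)) + q^(2k+1) (1-q)² a k`,
so the invariant `0 < a k ∧ q a (k-1) ≤ a k` propagates by induction.
-/

def IsNearestNeighbourKernel {R : Type*} [Zero R] (p : ℕ → ℕ → R) : Prop :=
  ∀ k j : ℕ, j ≠ k + 1 → j ≠ k → ¬(1 ≤ k ∧ j = k - 1) → p k j = 0

section NearestNeighbour

variable {R : Type*} [NonUnitalNonAssocSemiring R] [TopologicalSpace R] {p : ℕ → ℕ → R}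

theorem IsNearestNeighbourKernel.hasSum_zero (hp : IsNearestNeighbourKernel p) (f : ℕ → R) :
    HasSum (fun j => p 0 j * f j) (p 0 0 * f 0 + p 0 1 * f 1) := by
  have hsupp : ∀ j ∉ ({0, 1} : Finset ℕ), p 0 j * f j = 0 := by
    intro j hj
    simp only [Finset.mem_insert, Finset.mem_singleton, not_or] at hj
    rw [hp 0 j (by omega) (by omega) (by omega), zero_mul]
  simpa using hasSum_sum_of_ne_finset_zero hsupp

theorem IsNearestNeighbourKernel.hasSum_of_pos (hp : IsNearestNeighbourKernel p) (f : ℕ → R)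
    {k : ℕ} (hk : 1 ≤ k) :
    HasSum (fun j => p k j * f j)
      (p k (k - 1) * f (k - 1) + p k k * f k + p k (k + 1) * f (k + 1)) := by
  have hsupp : ∀ j ∉ ({k - 1, k, k + 1} : Finset ℕ), p k j * f j = 0 := by
    intro j hj
    simp only [Finset.mem_insert, Finset.mem_singleton, not_or] at hj
    rw [hp k j (by omega) (by omega) (by omega), zero_mul]
  have hsum : HasSum (fun j => p k j * f j) _ := hasSum_sum_of_ne_finset_zero hsupp
  rwa [Finset.sum_insert (by simp; omega), Finset.sum_insert (by simp), Finset.sum_singleton,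
    ← add_assoc] at hsum

end NearestNeighbour

theorem two_div_add_inv_lt_one {q : ℝ} (hq0 : 0 < q) (hq1 : q ≠ 1) : 2 / (q + q⁻¹) < 1 := by
  rw [div_lt_one (by positivity), ← sub_pos]
  have hsq : 0 < (q - 1) ^ 2 := sq_pos_of_ne_zero (sub_ne_zero.mpr hq1)
  have : q + q⁻¹ - 2 = (q - 1) ^ 2 / q := by field_simp; ring
  rw [this]
  exact div_pos hsq hq0

section Recurrence

variable {q : ℝ} (hq0 : 0 < q) (hq1 : q < 1)
include hq0 hq1

theorem mul_le_of_recurrence (k : ℕ) {x y z : ℝ} (hy : 0 ≤ y) (hxy : q * x ≤ y)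
    (hrec : 2 * (1 - q ^ (2 * k + 1)) * y
      = q⁻¹ * (1 - q ^ (2 * k + 2)) * z + q * (1 - q ^ (2 * k)) * x) :
    q * y ≤ z := by
  set Q := q ^ (2 * k) with hQ
  have hQ1 : Q ≤ 1 := pow_le_one₀ hq0.le hq1.le
  have key : (1 - Q * q ^ 2) * (z - q * y)
      = q * (1 - Q) * (y - q * x) + Q * q * (1 - q) ^ 2 * y := by
    rw [pow_succ, pow_add, ← hQ] at hrec
    linear_combination -q * hrec - (1 - Q * q ^ 2) * z * mul_inv_cancel₀ hq0.ne'
  have hcoef : 0 < 1 - Q * q ^ 2 := by nlinarith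
  have hrhs : 0 ≤ q * (1 - Q) * (y - q * x) + Q * q * (1 - q) ^ 2 * y := by
    have : 0 ≤ Q := by positivity
    have : 0 ≤ y - q * x := by linarith
    have : 0 ≤ 1 - Q := by linarith
    positivity
  rw [← key] at hrhs
  linarith [nonneg_of_mul_nonneg_right hrhs hcoef]

theorem pos_of_recurrence {a : ℕ → ℝ} (h0 : 0 < a 0)
    (hrec : ∀ k : ℕ, 2 * (1 - q ^ (2 * k + 1)) * a k
      = q⁻¹ * (1 - q ^ (2 * k + 2)) * a (k + 1) + q * (1 - q ^ (2 * k)) * a (k - 1))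
    (k : ℕ) : 0 < a k ∧ q * a (k - 1) ≤ a k := by
  induction k with
  | zero => exact ⟨h0, by nlinarith⟩
  | succ k ih =>
    have hstep : q * a k ≤ a (k + 1) := mul_le_of_recurrence hq0 hq1 k ih.1.le ih.2 (hrec k)
    exact ⟨lt_of_lt_of_le (mul_pos hq0 ih.1) hstep, hstep⟩

end Recurrence

/-- Let `0 < q < 1`, let `p` be the transition function of the context and
`(a k)` the sequence of the context. Then `a` is a strictly positive eigenfunction of the
Markov operator of `p` with eigenvalue `λ = 2/(q+q⁻¹) < 1`: for every `k`,
`Σ_j p(k,j) a_j = (2/(q+q⁻¹)) a_k`, and `a_k > 0` for all `k`. -/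
theorem stmt9 (q : ℝ) (hq0 : 0 < q) (hq1 : q < 1) (p : ℕ → ℕ → ℝ)
    (hp1 : ∀ k : ℕ, p k (k + 1) = q⁻¹ * (1 - q ^ (2 * k + 2)) / (q + q⁻¹))
    (hp2 : ∀ k : ℕ, p k k = 2 * q ^ (2 * k + 1) / (q + q⁻¹))
    (hp3 : ∀ k : ℕ, 1 ≤ k → p k (k - 1) = q * (1 - q ^ (2 * k)) / (q + q⁻¹))
    (hp0 : ∀ k j : ℕ, j ≠ k + 1 → j ≠ k → ¬(1 ≤ k ∧ j = k - 1) → p k j = 0)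
    (a : ℕ → ℝ)
    (ha0 : a 0 = 1)
    (ha1 : 2 * (1 - q) * a 0 = q⁻¹ * (1 - q ^ 2) * a 1)
    (ha : ∀ k : ℕ, 1 ≤ k →
      2 * (1 - q ^ (2 * k + 1)) * a k
        = q⁻¹ * (1 - q ^ (2 * k + 2)) * a (k + 1) + q * (1 - q ^ (2 * k)) * a (k - 1)) :
    (∀ k : ℕ, 0 < a k) ∧ 2 / (q + q⁻¹) < 1 ∧
      ∀ k : ℕ, HasSum (fun j : ℕ => p k j * a j) (2 / (q + q⁻¹) * a k) := by
  have hrec : ∀ k : ℕ, 2 * (1 - q ^ (2 * k + 1)) * a k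
      = q⁻¹ * (1 - q ^ (2 * k + 2)) * a (k + 1) + q * (1 - q ^ (2 * k)) * a (k - 1) := by
    rintro (_ | k)
    · linear_combination ha1
    · exact ha (k + 1) k.succ_pos
  refine ⟨fun k => (pos_of_recurrence hq0 hq1 (ha0 ▸ one_pos) hrec k).1,
    two_div_add_inv_lt_one hq0 hq1.ne, fun k => ?_⟩
  rcases Nat.eq_zero_or_pos k with rfl | hk
  · have hsum := IsNearestNeighbourKernel.hasSum_zero hp0 a
    rw [hp2, hp1] at hsum
    refine (congrArg (HasSum _) ?_).mp hsum
    linear_combination (-1 / (q + q⁻¹)) * ha1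
  · have hsum := IsNearestNeighbourKernel.hasSum_of_pos hp0 a hk
    rw [hp3 k hk, hp2, hp1] at hsum
    refine (congrArg (HasSum _) ?_).mp hsum
    linear_combination (-1 / (q + q⁻¹)) * hrec k
end

section
/- Let S be a countable type, p : S → S → ℝ with p(s,t) ≥ 0 for all s,t and Σ_t p(s,t) ≤ 1 for every s. Let f : S → ℝ with f(s) > 0 for all s, and let 0 < λ < 1 be such that for every s the family (p(s,t)f(t))_t is summable with Σ_t p(s,t) f(t) ≤ λ f(s). Define the n-step transition function by p^1 = p and p^{n+1}(s,t) = Σ_u p^n(s,u) p(u,t). Then for all n ≥ 1 and all s,t: p^n(s,t) ≤ λ^n f(s)/f(t). -/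
/-- Let `S` be a countable type, `p : S → S → ℝ` with `p(s,t) ≥ 0` and
`Σ_t p(s,t) ≤ 1` for every `s`. Let `f : S → ℝ` be strictly positive and `0 < λ < 1`
be such that for every `s` the family `(p(s,t)f(t))_t` is summable with
`Σ_t p(s,t) f(t) ≤ λ f(s)`. Define the `n`-step transition function by `p¹ = p` and
`p^{n+1}(s,t) = Σ_u p^n(s,u) p(u,t)`. Then for all `n ≥ 1` and all `s, t`:
`p^n(s,t) ≤ λ^n f(s)/f(t)`. -/
theorem stmt10 {S : Type*} [Countable S] (p : S → S → ℝ)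
    (hp : ∀ s t : S, 0 ≤ p s t)
    (hpsum : ∀ s : S, Summable (fun t : S => p s t) ∧ ∑' t : S, p s t ≤ 1)
    (f : S → ℝ) (hf : ∀ s : S, 0 < f s)
    (lam : ℝ) (hlam0 : 0 < lam) (hlam1 : lam < 1)
    (hev : ∀ s : S, Summable (fun t : S => p s t * f t) ∧ ∑' t : S, p s t * f t ≤ lam * f s)
    (pn : ℕ → S → S → ℝ)
    (hpn1 : ∀ s t : S, pn 1 s t = p s t)
    (hpn : ∀ n : ℕ, 1 ≤ n → ∀ s t : S, pn (n + 1) s t = ∑' u : S, pn n s u * p u t) :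
    ∀ n : ℕ, 1 ≤ n → ∀ s t : S, pn n s t ≤ lam ^ n * f s / f t := by
  have key : ∀ n : ℕ, 1 ≤ n → ∀ s : S,
      (∀ t, 0 ≤ pn n s t) ∧ Summable (fun t => pn n s t * f t) ∧
      ∑' t, pn n s t * f t ≤ lam ^ n * f s := by
    intro n
    induction n with
    | zero => omega
    | succ m ih =>
      intro _ s
      rcases Nat.eq_zero_or_pos m with hm | hm
      · subst hm
        refine ⟨fun t => by rw [hpn1]; exact hp s t, ?_, ?_⟩
        · simpa only [hpn1] using (hev s).1
        · simpa only [hpn1, zero_add, pow_one] using (hev s).2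
      · obtain ⟨hnn, hsumm, hle⟩ := ih hm s
        have hptw : ∀ u, pn m s u * f u ≤ lam ^ m * f s := by
          intro u
          exact le_trans (Summable.le_tsum hsumm u
            (fun j _ => mul_nonneg (hnn j) (hf j).le)) hle
        set G : S → S → ℝ := fun u t => pn m s u * (p u t * f t) with hG
        have hG0 : ∀ x : S × S, 0 ≤ Function.uncurry G x := by
          intro x
          exact mul_nonneg (hnn _) (mul_nonneg (hp _ _) (hf _).le)
        have hslice : ∀ u, Summable (fun t => G u t) := by
          intro u; exact (hev u).1.mul_left _
        have hsliceSum : ∀ u, ∑' t, G u t ≤ pn m s u * (lam * f u) := by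
          intro u
          rw [hG, tsum_mul_left]
          exact mul_le_mul_of_nonneg_left (hev u).2 (hnn u)
        have hsumm' : Summable (fun u => pn m s u * (lam * f u)) :=
          (hsumm.mul_left lam).congr (fun u => by ring)
        have hmarg : Summable (fun u => ∑' t, G u t) :=
          Summable.of_nonneg_of_le
            (fun u => tsum_nonneg fun t => mul_nonneg (hnn _) (mul_nonneg (hp _ _) (hf _).le))
            hsliceSum hsumm'
        have hprod : Summable (Function.uncurry G) :=
          (summable_prod_of_nonneg hG0).2 ⟨fun u => hslice u, hmarg⟩
        have hswap : Summable (fun x : S × S => Function.uncurry G x.swap) :=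
          hprod.prod_symm
        have hmarg2 : Summable (fun t => ∑' u, G u t) := by
          have := ((summable_prod_of_nonneg (f := fun x : S × S => Function.uncurry G x.swap)
            (fun x => hG0 x.swap)).1 hswap).2
          exact this
        have heq : ∀ t, pn (m + 1) s t * f t = ∑' u, G u t := by
          intro t
          rw [hpn m hm s t, ← tsum_mul_right]
          congr 1; funext u; simp only [hG]; ring
        have hnn1 : ∀ t, 0 ≤ pn (m + 1) s t := by
          intro t
          rw [hpn m hm s t]
          exact tsum_nonneg fun u => mul_nonneg (hnn u) (hp u t)
        refine ⟨hnn1, ?_, ?_⟩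
        · exact hmarg2.congr fun t => (heq t).symm
        · calc ∑' t, pn (m + 1) s t * f t = ∑' t, ∑' u, G u t := by
                exact tsum_congr heq
            _ = ∑' u, ∑' t, G u t := Summable.tsum_comm hprod
            _ ≤ ∑' u, pn m s u * (lam * f u) := by
                exact Summable.tsum_le_tsum hsliceSum hmarg hsumm'
            _ = lam * ∑' u, pn m s u * f u := by
                rw [← tsum_mul_left]; congr 1; funext u; ring
            _ ≤ lam * (lam ^ m * f s) :=
                mul_le_mul_of_nonneg_left hle hlam0.le
            _ = lam ^ (m + 1) * f s := by ring
  intro n hn s t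
  obtain ⟨hnn, hsumm, hle⟩ := key n hn s
  have h1 : pn n s t * f t ≤ lam ^ n * f s :=
    le_trans (Summable.le_tsum hsumm t (fun j _ => mul_nonneg (hnn j) (hf j).le)) hle
  rw [le_div_iff₀ (hf t)]
  exact h1
end

section
/- Let S be a countable type, p : S → S → ℝ with p(s,t) ≥ 0 for all s,t and Σ_t p(s,t) ≤ 1 for every s. Let f : S → ℝ with f(s) > 0 for all s, and let 0 < λ < 1 be such that for every s the family (p(s,t)f(t))_t is summable with Σ_t p(s,t) f(t) ≤ λ f(s). Then the chain is transient: for all s,t, Σ_{n≥1} p^n(s,t) ≤ f(s)/((1−λ) f(t)) < ∞, where p^n is the n-step transition function. -/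
private lemma bridge11 {S : Type*} (g : S → ℝ) (hg : ∀ u, 0 ≤ g u) (c : ℝ) (hc : 0 ≤ c)
    (h : ∑' u, ENNReal.ofReal (g u) ≤ ENNReal.ofReal c) :
    Summable g ∧ ∑' u, g u ≤ c := by
  have hne : ∑' u, ENNReal.ofReal (g u) ≠ ⊤ :=
    ne_top_of_le_ne_top ENNReal.ofReal_ne_top h
  have hsum : Summable g := by
    have h2 := ENNReal.summable_toReal hne
    have h3 : ∀ u, (ENNReal.ofReal (g u)).toReal = g u := fun u => ENNReal.toReal_ofReal (hg u)
    simpa [h3] using h2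
  refine ⟨hsum, ?_⟩
  rw [← ENNReal.ofReal_le_ofReal_iff hc, ENNReal.ofReal_tsum_of_nonneg hg hsum]
  exact h

/-- Let `S` be a countable type, `p : S → S → ℝ` with `p(s,t) ≥ 0` and
`Σ_t p(s,t) ≤ 1` for every `s`. Let `f : S → ℝ` be strictly positive and `0 < λ < 1`
be such that for every `s` the family `(p(s,t)f(t))_t` is summable with
`Σ_t p(s,t) f(t) ≤ λ f(s)`. Then the chain is transient: for all `s, t`,
`Σ_{n≥1} p^n(s,t) ≤ f(s)/((1-λ) f(t)) < ∞`, where `p^n` is the `n`-step transition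
function (`p¹ = p`, `p^{n+1}(s,t) = Σ_u p^n(s,u) p(u,t)`). -/
theorem stmt11 {S : Type*} [Countable S] (p : S → S → ℝ)
    (hp : ∀ s t : S, 0 ≤ p s t)
    (hpsum : ∀ s : S, Summable (fun t : S => p s t) ∧ ∑' t : S, p s t ≤ 1)
    (f : S → ℝ) (hf : ∀ s : S, 0 < f s)
    (lam : ℝ) (hlam0 : 0 < lam) (hlam1 : lam < 1)
    (hev : ∀ s : S, Summable (fun t : S => p s t * f t) ∧ ∑' t : S, p s t * f t ≤ lam * f s)
    (pn : ℕ → S → S → ℝ)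
    (hpn1 : ∀ s t : S, pn 1 s t = p s t)
    (hpn : ∀ n : ℕ, 1 ≤ n → ∀ s t : S, pn (n + 1) s t = ∑' u : S, pn n s u * p u t) :
    ∀ s t : S, Summable (fun n : ℕ => pn (n + 1) s t) ∧
      ∑' n : ℕ, pn (n + 1) s t ≤ f s / ((1 - lam) * f t) := by
  have hptf : ∀ u t, p u t * f t ≤ lam * f u := fun u t =>
    le_trans (Summable.le_tsum (hev u).1 t fun j _ => mul_nonneg (hp u j) (hf j).le) (hev u).2
  have hinner : ∀ u : S,
      ∑' t, ENNReal.ofReal (p u t) * ENNReal.ofReal (f t) ≤ ENNReal.ofReal (lam * f u) := by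
    intro u
    have h1 : ∀ t, ENNReal.ofReal (p u t) * ENNReal.ofReal (f t)
        = ENNReal.ofReal (p u t * f t) := fun t => (ENNReal.ofReal_mul (hp u t)).symm
    calc ∑' t, ENNReal.ofReal (p u t) * ENNReal.ofReal (f t)
        = ∑' t, ENNReal.ofReal (p u t * f t) := tsum_congr h1
      _ = ENNReal.ofReal (∑' t, p u t * f t) :=
          (ENNReal.ofReal_tsum_of_nonneg (fun t => mul_nonneg (hp u t) (hf t).le) (hev u).1).symm
      _ ≤ ENNReal.ofReal (lam * f u) := ENNReal.ofReal_le_ofReal (hev u).2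
  have key : ∀ n : ℕ, ∀ s : S, (∀ t, 0 ≤ pn (n + 1) s t) ∧
      Summable (fun u => pn (n + 1) s u * f u) ∧
      ∑' u, pn (n + 1) s u * f u ≤ lam ^ (n + 1) * f s := by
    intro n
    induction n with
    | zero =>
      intro s
      simp only [hpn1, zero_add, pow_one]
      exact ⟨fun t => hp s t, (hev s).1, (hev s).2⟩
    | succ n ih =>
      intro s
      obtain ⟨hnn, hsumm, hbound⟩ := ih s
      have hrec : ∀ t, pn (n + 2) s t = ∑' u, pn (n + 1) s u * p u t :=
        fun t => hpn (n + 1) (by omega) s t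
      have hsum2 : ∀ t, Summable (fun u => pn (n + 1) s u * p u t) := by
        intro t
        refine Summable.of_nonneg_of_le (fun u => mul_nonneg (hnn u) (hp u t))
          (fun u => ?_) (hsumm.mul_left (lam / f t))
        have h1 : p u t ≤ lam * f u / f t := (le_div_iff₀ (hf t)).2 (hptf u t)
        calc pn (n + 1) s u * p u t
            ≤ pn (n + 1) s u * (lam * f u / f t) := mul_le_mul_of_nonneg_left h1 (hnn u)
          _ = lam / f t * (pn (n + 1) s u * f u) := by ring
      have hnn2 : ∀ t, 0 ≤ pn (n + 2) s t := fun t =>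
        (hrec t) ▸ tsum_nonneg fun u => mul_nonneg (hnn u) (hp u t)
      have hofr : ∀ t, ENNReal.ofReal (pn (n + 2) s t)
          = ∑' u, ENNReal.ofReal (pn (n + 1) s u) * ENNReal.ofReal (p u t) := by
        intro t
        rw [hrec t,
          ENNReal.ofReal_tsum_of_nonneg (fun u => mul_nonneg (hnn u) (hp u t)) (hsum2 t)]
        exact tsum_congr fun u => ENNReal.ofReal_mul (hnn u)
      have hprev : ∑' u, ENNReal.ofReal (pn (n + 1) s u * f u)
          ≤ ENNReal.ofReal (lam ^ (n + 1) * f s) := by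
        rw [← ENNReal.ofReal_tsum_of_nonneg (fun u => mul_nonneg (hnn u) (hf u).le) hsumm]
        exact ENNReal.ofReal_le_ofReal hbound
      have hEbig : ∑' t, ENNReal.ofReal (pn (n + 2) s t * f t)
          ≤ ENNReal.ofReal (lam ^ (n + 2) * f s) := by
        calc ∑' t, ENNReal.ofReal (pn (n + 2) s t * f t)
            = ∑' t, ∑' u, ENNReal.ofReal (pn (n + 1) s u) *
                (ENNReal.ofReal (p u t) * ENNReal.ofReal (f t)) := by
              refine tsum_congr fun t => ?_
              rw [ENNReal.ofReal_mul (hnn2 t), hofr t, ← ENNReal.tsum_mul_right]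
              exact tsum_congr fun u => mul_assoc _ _ _
          _ = ∑' u, ∑' t, ENNReal.ofReal (pn (n + 1) s u) *
                (ENNReal.ofReal (p u t) * ENNReal.ofReal (f t)) := ENNReal.tsum_comm
          _ = ∑' u, ENNReal.ofReal (pn (n + 1) s u) *
                ∑' t, ENNReal.ofReal (p u t) * ENNReal.ofReal (f t) :=
              tsum_congr fun u => ENNReal.tsum_mul_left
          _ ≤ ∑' u, ENNReal.ofReal (pn (n + 1) s u) * ENNReal.ofReal (lam * f u) :=
              ENNReal.tsum_le_tsum fun u => mul_le_mul_right (hinner u) _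
          _ = ENNReal.ofReal lam * ∑' u, ENNReal.ofReal (pn (n + 1) s u * f u) := by
              rw [← ENNReal.tsum_mul_left]
              refine tsum_congr fun u => ?_
              rw [ENNReal.ofReal_mul hlam0.le, ENNReal.ofReal_mul (hnn u)]
              ring
          _ ≤ ENNReal.ofReal lam * ENNReal.ofReal (lam ^ (n + 1) * f s) :=
              mul_le_mul_right hprev _
          _ = ENNReal.ofReal (lam ^ (n + 2) * f s) := by
              rw [← ENNReal.ofReal_mul hlam0.le]
              ring_nf
      have hb := bridge11 (fun t => pn (n + 2) s t * f t)
        (fun t => mul_nonneg (hnn2 t) (hf t).le) (lam ^ (n + 2) * f s)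
        (mul_nonneg (pow_nonneg hlam0.le _) (hf s).le) hEbig
      exact ⟨hnn2, hb.1, hb.2⟩
  intro s t
  have h1lam : 0 < 1 - lam := by linarith
  have hterm : ∀ n : ℕ, pn (n + 1) s t ≤ lam ^ (n + 1) * f s / f t := by
    intro n
    obtain ⟨hnn, hsumm, hbound⟩ := key n s
    have h1 : pn (n + 1) s t * f t ≤ lam ^ (n + 1) * f s :=
      le_trans (Summable.le_tsum hsumm t fun j _ => mul_nonneg (hnn j) (hf j).le) hbound
    exact (le_div_iff₀ (hf t)).2 h1
  have hnn : ∀ n : ℕ, 0 ≤ pn (n + 1) s t := fun n => (key n s).1 t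
  have hgeo0 : Summable (fun n : ℕ => lam ^ n) :=
    summable_geometric_of_lt_one hlam0.le hlam1
  have hgeo : Summable (fun n : ℕ => lam ^ (n + 1) * f s / f t) := by
    refine (hgeo0.mul_left (lam * f s / f t)).congr fun n => ?_
    rw [pow_succ]
    ring
  have hs : Summable (fun n : ℕ => pn (n + 1) s t) :=
    Summable.of_nonneg_of_le hnn hterm hgeo
  refine ⟨hs, ?_⟩
  calc ∑' n : ℕ, pn (n + 1) s t
      ≤ ∑' n : ℕ, lam ^ (n + 1) * f s / f t := Summable.tsum_le_tsum hterm hs hgeo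
    _ = ∑' n : ℕ, lam * f s / f t * lam ^ n := tsum_congr fun n => by rw [pow_succ]; ring
    _ = lam * f s / f t * (1 - lam)⁻¹ := by
        rw [tsum_mul_left, tsum_geometric_of_lt_one hlam0.le hlam1]
    _ ≤ 1 * f s / f t * (1 - lam)⁻¹ := by
        have h1 : lam * f s ≤ 1 * f s := mul_le_mul_of_nonneg_right hlam1.le (hf s).le
        have h2 : lam * f s / f t ≤ 1 * f s / f t := (div_le_div_iff_of_pos_right (hf t)).2 h1
        exact mul_le_mul_of_nonneg_right h2 (inv_nonneg.2 h1lam.le)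
    _ = f s / ((1 - lam) * f t) := by
        field_simp
end

section
/- Let 0<q<1, let p be the transition function on ℕ defined in the context, with n-step transition function p^n, and let (a_k)_{k≥0} be the sequence defined in the context. Then for all i,j ∈ ℕ and all n ≥ 1: p^n(i,j) ≤ (2/(q+q^{−1}))^n · a_i/a_j; in particular p^n(i,j) → 0 as n → ∞ for every fixed i,j. -/
set_option maxHeartbeats 1000000 in


/-- Let `0 < q < 1`, let `p` be the transition function on `ℕ` of the
context, with `n`-step transition function `p^n` (`p¹ = p`,
`p^{n+1}(s,t) = Σ_u p^n(s,u) p(u,t)`), and let `(a k)` be the sequence of the context.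
Then for all `i, j ∈ ℕ` and all `n ≥ 1`: `p^n(i,j) ≤ (2/(q+q⁻¹))^n · a_i/a_j`;
in particular `p^n(i,j) → 0` as `n → ∞` for every fixed `i, j`. -/
theorem stmt12 (q : ℝ) (hq0 : 0 < q) (hq1 : q < 1) (p : ℕ → ℕ → ℝ)
    (hp1 : ∀ k : ℕ, p k (k + 1) = q⁻¹ * (1 - q ^ (2 * k + 2)) / (q + q⁻¹))
    (hp2 : ∀ k : ℕ, p k k = 2 * q ^ (2 * k + 1) / (q + q⁻¹))
    (hp3 : ∀ k : ℕ, 1 ≤ k → p k (k - 1) = q * (1 - q ^ (2 * k)) / (q + q⁻¹))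
    (hp0 : ∀ k j : ℕ, j ≠ k + 1 → j ≠ k → ¬(1 ≤ k ∧ j = k - 1) → p k j = 0)
    (pn : ℕ → ℕ → ℕ → ℝ)
    (hpn1 : ∀ s t : ℕ, pn 1 s t = p s t)
    (hpn : ∀ n : ℕ, 1 ≤ n → ∀ s t : ℕ, pn (n + 1) s t = ∑' u : ℕ, pn n s u * p u t)
    (a : ℕ → ℝ)
    (ha0 : a 0 = 1)
    (ha1 : 2 * (1 - q) * a 0 = q⁻¹ * (1 - q ^ 2) * a 1)
    (ha : ∀ k : ℕ, 1 ≤ k →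
      2 * (1 - q ^ (2 * k + 1)) * a k
        = q⁻¹ * (1 - q ^ (2 * k + 2)) * a (k + 1) + q * (1 - q ^ (2 * k)) * a (k - 1)) :
    (∀ i j : ℕ, ∀ n : ℕ, 1 ≤ n → pn n i j ≤ (2 / (q + q⁻¹)) ^ n * a i / a j) ∧
      ∀ i j : ℕ, Filter.Tendsto (fun n : ℕ => pn n i j) Filter.atTop (nhds 0) := by
  classical
  have hqne : q ≠ 0 := ne_of_gt hq0
  have hqq : q * q⁻¹ = 1 := mul_inv_cancel₀ hqne
  have hQ2 : 2 < q + q⁻¹ := by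
    nlinarith [hqq, hq0, hq1, mul_pos (sub_pos.2 hq1) (sub_pos.2 hq1)]
  have hQpos : 0 < q + q⁻¹ := by linarith
  set c : ℝ := 2 / (q + q⁻¹) with hc
  have hc0 : 0 < c := div_pos two_pos hQpos
  have hc1 : c < 1 := (div_lt_one hQpos).2 hQ2
  -- support facts
  have hsupC : ∀ t u : ℕ, t + 2 ≤ u → p u t = 0 := by
    intro t u h
    exact hp0 u t (by omega) (by omega) (by omega)
  have hsupR : ∀ s u : ℕ, s + 2 ≤ u → p s u = 0 := by
    intro s u h
    exact hp0 s u (by omega) (by omega) (by omega)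
  -- finite window versions of the tsums
  have hcolfin : ∀ (t : ℕ) (g : ℕ → ℝ),
      (∑' u : ℕ, g u * p u t) = ∑ u ∈ Finset.range (t + 2), g u * p u t := by
    intro t g
    refine tsum_eq_sum ?_
    intro u hu
    rw [Finset.mem_range, not_lt] at hu
    rw [hsupC t u hu, mul_zero]
  have hrowfin : ∀ (s : ℕ) (g : ℕ → ℝ),
      (∑' u : ℕ, p s u * g u) = ∑ u ∈ Finset.range (s + 2), p s u * g u := by
    intro s g
    refine tsum_eq_sum ?_
    intro u hu
    rw [Finset.mem_range, not_lt] at hu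
    rw [hsupR s u hu, zero_mul]
  have hsumrow : ∀ (s : ℕ) (g : ℕ → ℝ), Summable (fun u : ℕ => p s u * g u) := by
    intro s g
    refine summable_of_ne_finset_zero (s := Finset.range (s + 2)) ?_
    intro u hu
    rw [Finset.mem_range, not_lt] at hu
    rw [hsupR s u hu, zero_mul]
  -- nonnegativity of p
  have hpow1 : ∀ m : ℕ, q ^ m ≤ 1 := fun m => pow_le_one₀ hq0.le hq1.le
  have hpnn : ∀ k j : ℕ, 0 ≤ p k j := by
    intro k j
    by_cases h1 : j = k + 1
    · subst h1; rw [hp1 k]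
      apply div_nonneg _ hQpos.le
      exact mul_nonneg (inv_nonneg.mpr hq0.le) (by linarith [hpow1 (2 * k + 2)])
    by_cases h2 : j = k
    · rw [h2, hp2 k]; positivity
    by_cases h3 : 1 ≤ k ∧ j = k - 1
    · obtain ⟨hk, hj⟩ := h3; subst hj; rw [hp3 k hk]
      apply div_nonneg _ hQpos.le
      exact mul_nonneg hq0.le (by linarith [hpow1 (2 * k)])
    · rw [hp0 k j h1 h2 h3]
  -- positivity and growth of a
  have haux : ∀ k : ℕ, 0 < a k ∧ q * a k ≤ a (k + 1) := by
    intro k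
    induction k with
    | zero =>
      refine ⟨by rw [ha0]; norm_num, ?_⟩
      have e : (1 - q ^ 2) * a 1 = 2 * q * (1 - q) := by
        linear_combination (-q) * ha1 - (1 - q ^ 2) * a 1 * hqq + 2 * q * (1 - q) * ha0
      have h2 : (0:ℝ) < 1 - q ^ 2 := by nlinarith
      rw [ha0]
      nlinarith [e, h2, mul_pos hq0 (mul_pos (sub_pos.2 hq1) (sub_pos.2 hq1))]
    | succ k ih =>
      obtain ⟨hak, hqak⟩ := ih
      have hak1 : 0 < a (k + 1) := lt_of_lt_of_le (mul_pos hq0 hak) hqak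
      have H := ha (k + 1) (by omega)
      simp only [Nat.add_sub_cancel] at H
      have key : (1 - q ^ (2 * k + 4)) * a (k + 1 + 1) =
          2 * q * (1 - q ^ (2 * k + 3)) * a (k + 1) - q ^ 2 * (1 - q ^ (2 * k + 2)) * a k := by
        linear_combination (-q) * H - (1 - q ^ (2 * k + 4)) * a (k + 1 + 1) * hqq
      have e3 : q ^ (2 * k + 3) = q ^ (2 * k + 2) * q := by ring
      have e4 : q ^ (2 * k + 4) = q ^ (2 * k + 2) * q ^ 2 := by ring
      rw [e3, e4] at key
      have hs1 : q ^ (2 * k + 2) ≤ 1 := hpow1 _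
      have hs0 : (0:ℝ) < q ^ (2 * k + 2) := pow_pos hq0 _
      set s : ℝ := q ^ (2 * k + 2) with hsdef
      refine ⟨hak1, ?_⟩
      have hcoef : (0:ℝ) ≤ 1 - 2 * s * q + s * q ^ 2 := by
        nlinarith [mul_nonneg (mul_nonneg hq0.le (sub_nonneg.2 hs1))
          (show (0:ℝ) ≤ 2 - q by linarith), sq_nonneg (1 - q)]
      have hfac : (0:ℝ) < 1 - s * q ^ 2 := by
        nlinarith [mul_le_mul_of_nonneg_right hs1 (sq_nonneg q)]
      have hX : (0:ℝ) ≤ (1 - s * q ^ 2) * (a (k + 1 + 1) - q * a (k + 1)) := by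
        nlinarith [key, mul_nonneg (mul_nonneg hq0.le hcoef) (sub_nonneg.2 hqak),
          mul_nonneg (mul_nonneg (mul_nonneg (sq_nonneg q) hak.le) hs0.le) (sq_nonneg (1 - q))]
      nlinarith [le_of_mul_le_mul_left
        (by linarith : (1 - s * q ^ 2) * 0 ≤ (1 - s * q ^ 2) * (a (k + 1 + 1) - q * a (k + 1))) hfac]
  -- the eigenvector relation
  have hEig : ∀ i : ℕ, (∑' u : ℕ, p i u * a u) = c * a i := by
    intro i
    rw [hrowfin i a]
    match i with
    | 0 =>
      rw [Finset.sum_range_succ, Finset.sum_range_succ, Finset.sum_range_zero,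
        hp2 0, hp1 0, hc]
      linear_combination (-1 / (q + q⁻¹)) * ha1
    | (m + 1) =>
      rw [Finset.sum_range_succ, Finset.sum_range_succ, Finset.sum_range_succ]
      have hz : ∀ u ∈ Finset.range m, p (m + 1) u * a u = 0 := by
        intro u hu
        rw [Finset.mem_range] at hu
        rw [hp0 (m + 1) u (by omega) (by omega) (by omega), zero_mul]
      have h3 : p (m + 1) m = q * (1 - q ^ (2 * (m + 1))) / (q + q⁻¹) := hp3 (m + 1) (by omega)
      rw [Finset.sum_eq_zero hz, hp2 (m + 1), hp1 (m + 1), h3, hc]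
      have H := ha (m + 1) (by omega)
      simp only [Nat.add_sub_cancel] at H
      linear_combination (-1 / (q + q⁻¹)) * H
  -- Chapman-Kolmogorov in the needed direction
  have CK : ∀ n : ℕ, 1 ≤ n → ∀ s t : ℕ, pn (n + 1) s t = ∑' u : ℕ, p s u * pn n u t := by
    intro n hn
    induction n, hn using Nat.le_induction with
    | base =>
      intro s t
      rw [hpn 1 le_rfl]
      exact tsum_congr fun u => by rw [hpn1, hpn1]
    | succ n hn IH =>
      intro s t
      rw [hpn (n + 1) (by omega), hcolfin t]
      have hsummand : ∀ u : ℕ, Summable (fun v : ℕ => p s v * pn n v u * p u t) := by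
        intro u
        exact (hsumrow s fun v => pn n v u * p u t).congr fun v => (mul_assoc _ _ _).symm
      calc ∑ u ∈ Finset.range (t + 2), pn (n + 1) s u * p u t
          = ∑ u ∈ Finset.range (t + 2), ∑' v : ℕ, p s v * pn n v u * p u t := by
            refine Finset.sum_congr rfl fun u _ => ?_
            rw [IH s u, ← tsum_mul_right]
        _ = ∑' v : ℕ, ∑ u ∈ Finset.range (t + 2), p s v * pn n v u * p u t := by
            rw [← Summable.tsum_finsetSum fun u _ => hsummand u]
        _ = ∑' v : ℕ, p s v * pn (n + 1) v t := by
            refine tsum_congr fun v => ?_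
            rw [hpn n hn v t, hcolfin t, Finset.mul_sum]
            exact Finset.sum_congr rfl fun u _ => mul_assoc _ _ _
  -- the main bound
  have B : ∀ n : ℕ, 1 ≤ n → ∀ i j : ℕ, 0 ≤ pn n i j ∧ pn n i j * a j ≤ c ^ n * a i := by
    intro n hn
    induction n, hn using Nat.le_induction with
    | base =>
      intro i j
      rw [hpn1]
      refine ⟨hpnn i j, ?_⟩
      rw [pow_one, ← hEig i]
      exact Summable.le_tsum (hsumrow i a) j fun u _ => mul_nonneg (hpnn i u) (haux u).1.le
    | succ n hn IH =>
      intro i j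
      rw [CK n hn i j]
      constructor
      · exact tsum_nonneg fun v => mul_nonneg (hpnn i v) (IH v j).1
      · have hstep : (∑' v : ℕ, p i v * pn n v j) ≤ ∑' v : ℕ, c ^ n / a j * (p i v * a v) := by
          refine Summable.tsum_le_tsum (fun v => ?_) (hsumrow i fun v => pn n v j) ?_
          · have h1 : pn n v j ≤ c ^ n * a v / a j :=
              (le_div_iff₀ (haux j).1).mpr (IH v j).2
            calc p i v * pn n v j ≤ p i v * (c ^ n * a v / a j) :=
                  mul_le_mul_of_nonneg_left h1 (hpnn i v)
              _ = c ^ n / a j * (p i v * a v) := by ring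
          · exact (hsumrow i a).mul_left (c ^ n / a j)
        have h2 : (∑' v : ℕ, c ^ n / a j * (p i v * a v)) = c ^ (n + 1) * a i / a j := by
          rw [tsum_mul_left, hEig i]
          field_simp
          ring
        have h3 : (∑' v : ℕ, p i v * pn n v j) ≤ c ^ (n + 1) * a i / a j :=
          hstep.trans (le_of_eq h2)
        calc (∑' v : ℕ, p i v * pn n v j) * a j
            ≤ c ^ (n + 1) * a i / a j * a j :=
              mul_le_mul_of_nonneg_right h3 (haux j).1.le
          _ = c ^ (n + 1) * a i := div_mul_cancel₀ _ (ne_of_gt (haux j).1)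
  refine ⟨fun i j n hn => (le_div_iff₀ (haux j).1).mpr (B n hn i j).2, fun i j => ?_⟩
  have h1 : Filter.Tendsto (fun n : ℕ => c ^ n * (a i / a j)) Filter.atTop (nhds 0) := by
    simpa using (tendsto_pow_atTop_nhds_zero_of_lt_one hc0.le hc1).mul_const (a i / a j)
  apply squeeze_zero' ?_ ?_ h1
  · filter_upwards [Filter.eventually_ge_atTop 1] with n hn
    exact (B n hn i j).1
  · filter_upwards [Filter.eventually_ge_atTop 1] with n hn
    have h := (le_div_iff₀ (haux j).1).mpr (B n hn i j).2
    rwa [mul_div_assoc] at h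
end

section
/- Let 0<q<1 and let p be the transition function on ℕ defined in the context. Then p has no stationary probability distribution: there is no function μ : ℕ → ℝ with μ(k) ≥ 0 for all k, Σ_k μ(k) = 1, and Σ_i μ(i) p(i,j) = μ(j) for every j. -/
/-!
The kernel is a nearest-neighbour (birth–death) chain whose rows sum to one, so summing the
stationarity equations from the left gives detailed balance
`μ k * p k (k+1) = μ (k+1) * p (k+1) k`. Since `p (k+1) k = q² * p k (k+1) ≤ p k (k+1)`, any
nonnegative stationary measure is nondecreasing; a summable nondecreasing sequence tends to `0`
and hence vanishes, so it cannot have total mass `1`.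
-/

def IsNearestNeighbour (p : ℕ → ℕ → ℝ) : Prop :=
  ∀ i j, p i j ≠ 0 → i ≤ j + 1 ∧ j ≤ i + 1

namespace IsNearestNeighbour

variable {p : ℕ → ℕ → ℝ} {μ : ℕ → ℝ}

lemma eq_zero_of_succ_lt (hp : IsNearestNeighbour p) {i j : ℕ} (h : j + 1 < i) : p i j = 0 := by
  by_contra hne
  have := hp i j hne
  omega

lemma eq_zero_of_lt_pred (hp : IsNearestNeighbour p) {i j : ℕ} (h : i + 1 < j) : p i j = 0 := by
  by_contra hne
  have := hp i j hne
  omega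

lemma tsum_mul_apply_zero (hp : IsNearestNeighbour p) :
    ∑' i, μ i * p i 0 = μ 0 * p 0 0 + μ 1 * p 1 0 := by
  rw [tsum_eq_sum (s := {0, 1}), Finset.sum_pair zero_ne_one]
  intro i hi
  simp only [Finset.mem_insert, Finset.mem_singleton, not_or] at hi
  rw [hp.eq_zero_of_succ_lt (by omega), mul_zero]

lemma tsum_mul_apply_succ (hp : IsNearestNeighbour p) (j : ℕ) :
    ∑' i, μ i * p i (j + 1) =
      μ j * p j (j + 1) + μ (j + 1) * p (j + 1) (j + 1) + μ (j + 2) * p (j + 2) (j + 1) := by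
  rw [tsum_eq_sum (s := {j, j + 1, j + 2}), Finset.sum_insert (by simp),
    Finset.sum_pair (by omega), add_assoc]
  intro i hi
  simp only [Finset.mem_insert, Finset.mem_singleton, not_or] at hi
  rcases lt_or_gt_of_ne hi.1 with hij | hij
  · rw [hp.eq_zero_of_lt_pred (by omega), mul_zero]
  · rw [hp.eq_zero_of_succ_lt (by omega), mul_zero]

theorem detailed_balance (hp : IsNearestNeighbour p) (hrow₀ : p 0 0 + p 0 1 = 1)
    (hrow : ∀ k, p (k + 1) k + p (k + 1) (k + 1) + p (k + 1) (k + 2) = 1)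
    (hst : ∀ j, ∑' i, μ i * p i j = μ j) (k : ℕ) :
    μ k * p k (k + 1) = μ (k + 1) * p (k + 1) k := by
  induction k with
  | zero =>
    have h := hst 0
    rw [hp.tsum_mul_apply_zero] at h
    linear_combination μ 0 * hrow₀ - h
  | succ k ih =>
    have h := hst (k + 1)
    rw [hp.tsum_mul_apply_succ] at h
    linear_combination μ (k + 1) * hrow k - h + ih

theorem monotone_of_stationary (hp : IsNearestNeighbour p) (hrow₀ : p 0 0 + p 0 1 = 1)
    (hrow : ∀ k, p (k + 1) k + p (k + 1) (k + 1) + p (k + 1) (k + 2) = 1)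
    (hdrift : ∀ k, p (k + 1) k ≤ p k (k + 1)) (hup : ∀ k, 0 < p k (k + 1))
    (hμ : ∀ k, 0 ≤ μ k) (hst : ∀ j, ∑' i, μ i * p i j = μ j) : Monotone μ :=
  monotone_nat_of_le_succ fun k => le_of_mul_le_mul_right
    (hp.detailed_balance hrow₀ hrow hst k ▸ mul_le_mul_of_nonneg_left (hdrift k) (hμ _)) (hup k)

end IsNearestNeighbour

lemma eq_zero_of_monotone_of_summable {μ : ℕ → ℝ} (hmono : Monotone μ) (hμ : ∀ k, 0 ≤ μ k)
    (hs : Summable μ) : μ = 0 :=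
  funext fun k => le_antisymm (hmono.ge_of_tendsto hs.tendsto_atTop_zero k) (hμ k)

/-- Let `0 < q < 1` and let `p` be the transition function on `ℕ` of the
context. Then `p` has no stationary probability distribution: there is no `μ : ℕ → ℝ`
with `μ(k) ≥ 0` for all `k`, `Σ_k μ(k) = 1`, and `Σ_i μ(i) p(i,j) = μ(j)` for every `j`. -/
theorem stmt13 (q : ℝ) (hq0 : 0 < q) (hq1 : q < 1) (p : ℕ → ℕ → ℝ)
    (hp1 : ∀ k : ℕ, p k (k + 1) = q⁻¹ * (1 - q ^ (2 * k + 2)) / (q + q⁻¹))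
    (hp2 : ∀ k : ℕ, p k k = 2 * q ^ (2 * k + 1) / (q + q⁻¹))
    (hp3 : ∀ k : ℕ, 1 ≤ k → p k (k - 1) = q * (1 - q ^ (2 * k)) / (q + q⁻¹))
    (hp0 : ∀ k j : ℕ, j ≠ k + 1 → j ≠ k → ¬(1 ≤ k ∧ j = k - 1) → p k j = 0) :
    ¬ ∃ μ : ℕ → ℝ, (∀ k : ℕ, 0 ≤ μ k) ∧ HasSum μ 1 ∧
      ∀ j : ℕ, ∑' i : ℕ, μ i * p i j = μ j := by
  rintro ⟨μ, hμ, hμ1, hst⟩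
  have hdown (k : ℕ) : p (k + 1) k = q * (1 - q ^ (2 * k + 2)) / (q + q⁻¹) := by
    simpa [mul_add] using hp3 (k + 1) le_add_self
  have hnn : IsNearestNeighbour p := fun i j hij => by
    by_contra h
    exact hij (hp0 i j (by omega) (by omega) (by omega))
  have hrow₀ : p 0 0 + p 0 1 = 1 := by
    rw [hp2, hp1]
    field_simp
    ring
  have hrow (k : ℕ) : p (k + 1) k + p (k + 1) (k + 1) + p (k + 1) (k + 2) = 1 := by
    rw [hdown, hp2, hp1]
    field_simp
    ring
  have hsmall (k : ℕ) : 0 < 1 - q ^ (2 * k + 2) := sub_pos.mpr (pow_lt_one₀ hq0.le hq1 (by omega))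
  have hdrift (k : ℕ) : p (k + 1) k ≤ p k (k + 1) := by
    rw [hdown, hp1]
    gcongr
    · exact (hsmall k).le
    · exact (hq1.trans (one_lt_inv₀ hq0 |>.mpr hq1)).le
  have hup (k : ℕ) : 0 < p k (k + 1) := by
    rw [hp1]
    exact div_pos (mul_pos (inv_pos.mpr hq0) (hsmall k)) (by positivity)
  have hzero := eq_zero_of_monotone_of_summable
    (hnn.monotone_of_stationary hrow₀ hrow hdrift hup hμ hst) hμ hμ1.summable
  subst hzero
  exact one_ne_zero (hμ1.unique hasSum_zero)
end

section
/- Let A be a unital ℂ-algebra equipped with a conjugate-linear anti-multiplicative involution x ↦ x*, let q be a nonzero real number, and let α, γ ∈ A satisfy α*α + γ*γ = 1, αα* + q^2 γ*γ = 1, γ*γ = γγ*, αγ = qγα, and αγ* = qγ*α. Then for every k ≥ 0, writing t = γ*γ, one has q^{−1}(α t^k α* + q^2 γ* t^k γ) + q(γ t^k γ* + α* t^k α) = q^{−1}(q^2)^k t^k (1 − q^2 t) + 2q·t^{k+1} + q·q^{−2k} t^k (1 − t). (This computes the Markov operator A_ω on the subalgebra generated by γ*γ: it acts on functions h of t by (A_ω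 h)(t) = (1/(q+q^{−1}))(q^{−1}((1−q^2 t)h(q^2 t) + q^2 t·h(t)) + q(t·h(t) + (1−t)h(q^{−2}t))).) -/
/-!
Put `t = γ*γ`. Normality of `γ` makes `γ` and `γ*` commute with `t`, so `γ t^k γ*` and
`γ* t^k γ` both equal `t^{k+1}`. The two `q`-commutation relations give `α t = q² t α`, hence
`α t^k = q^{2k} t^k α`; moving `t^k` past `α` then turns `α t^k α*` into `q^{2k} t^k (αα*)` and
`α* t^k α` into `q^{-2k} (α*α) t^k`, which the two unitarity relations evaluate.
-/

section SkewCommute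

variable {R A : Type*} [CommSemiring R] [Semiring A] [Algebra R A]

theorem mul_mul_eq_smul_mul_mul {a x y : A} {c c' : R} (hx : a * x = c • (x * a))
    (hy : a * y = c' • (y * a)) : a * (x * y) = (c * c') • (x * y * a) := by
  rw [← mul_assoc, hx, smul_mul_assoc, mul_assoc, hy, mul_smul_comm, smul_smul, mul_assoc,
    mul_comm c]

theorem mul_pow_eq_smul_pow_mul {a t : A} {c : R} (h : a * t = c • (t * a)) (m : ℕ) :
    a * t ^ m = c ^ m • (t ^ m * a) := by
  induction m with
  | zero => simp
  | succ n ih =>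
    rw [pow_succ, ← mul_assoc, ih, smul_mul_assoc, mul_assoc, h, mul_smul_comm, smul_smul,
      ← mul_assoc, ← pow_succ, ← pow_succ]

end SkewCommute

theorem pow_mul_eq_inv_smul_mul_pow {K A : Type*} [Field K] [Semiring A] [Algebra K A]
    {a t : A} {c : K} (hc : c ≠ 0) (h : a * t = c • (t * a)) (m : ℕ) :
    t ^ m * a = (c ^ m)⁻¹ • (a * t ^ m) := by
  rw [mul_pow_eq_smul_pow_mul h, smul_smul, inv_mul_cancel₀ (pow_ne_zero m hc), one_smul]

section Normal

variable {M : Type*} [Monoid M] {d g : M}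

theorem Commute.mul_mul_pow_mul (h : Commute d g) (k : ℕ) :
    d * (d * g) ^ k * g = (d * g) ^ (k + 1) := by
  rw [((Commute.refl d).mul_right h).pow_right k, mul_assoc, ← pow_succ]

theorem Commute.mul_mul_pow_mul' (h : Commute d g) (k : ℕ) :
    g * (d * g) ^ k * d = (d * g) ^ (k + 1) := by
  rw [(h.symm.mul_right (Commute.refl g)).pow_right k, mul_assoc, ← h.eq, ← pow_succ]

end Normal

theorem stmt16_general {A : Type*} [Ring A] [Algebra ℂ A] [StarRing A]
    (q : ℝ) (hq : q ≠ 0) (α γ : A)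
    (h1 : star α * α + star γ * γ = 1)
    (h2 : α * star α + (q : ℂ) ^ 2 • (star γ * γ) = 1)
    (h3 : star γ * γ = γ * star γ)
    (h4 : α * γ = (q : ℂ) • (γ * α))
    (h5 : α * star γ = (q : ℂ) • (star γ * α)) :
    ∀ k : ℕ,
      (q : ℂ)⁻¹ • (α * (star γ * γ) ^ k * star α
            + (q : ℂ) ^ 2 • (star γ * (star γ * γ) ^ k * γ))
        + (q : ℂ) • (γ * (star γ * γ) ^ k * star γ
            + star α * (star γ * γ) ^ k * α)
      = ((q : ℂ)⁻¹ * ((q : ℂ) ^ 2) ^ k)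
            • ((star γ * γ) ^ k * (1 - (q : ℂ) ^ 2 • (star γ * γ)))
        + (2 * (q : ℂ)) • (star γ * γ) ^ (k + 1)
        + ((q : ℂ) * ((q : ℂ) ^ (2 * k))⁻¹)
            • ((star γ * γ) ^ k * (1 - star γ * γ)) := by
  intro k
  set t := star γ * γ
  have hq' : (q : ℂ) ≠ 0 := by exact_mod_cast hq
  have hnormal : Commute (star γ) γ := h3
  have hαt : α * t = ((q : ℂ) * q) • (t * α) := mul_mul_eq_smul_mul_mul h5 h4
  have hααs : α * star α = 1 - (q : ℂ) ^ 2 • t := eq_sub_of_add_eq h2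
  have hsαα : star α * α = 1 - t := eq_sub_of_add_eq h1
  have hα_α : α * t ^ k * star α = ((q : ℂ) * q) ^ k • (t ^ k * (1 - (q : ℂ) ^ 2 • t)) := by
    rw [mul_pow_eq_smul_pow_mul hαt, smul_mul_assoc, mul_assoc, hααs]
  have hsα_α : star α * t ^ k * α = (((q : ℂ) * q) ^ k)⁻¹ • (t ^ k * (1 - t)) := by
    rw [mul_assoc, pow_mul_eq_inv_smul_mul_pow (mul_ne_zero hq' hq') hαt, mul_smul_comm,
      ← mul_assoc, hsαα, ((Commute.one_right _).sub_right ((Commute.refl t).pow_left k)).eq]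
  rw [hα_α, hsα_α, hnormal.mul_mul_pow_mul, hnormal.mul_mul_pow_mul']
  match_scalars
  · field_simp
  · field_simp; ring
  · rw [pow_mul]; field_simp

/-- Let `A` be a unital `ℂ`-algebra with a conjugate-linear
anti-multiplicative involution `x ↦ x*`, let `q` be a nonzero real number, and let
`α, γ ∈ A` satisfy the defining relations of `C(SU_q(2))`. Then for every `k ≥ 0`,
writing `t = γ*γ`, one has
`q⁻¹(α t^k α* + q² γ* t^k γ) + q(γ t^k γ* + α* t^k α)`
`  = q⁻¹(q²)^k t^k (1 - q² t) + 2q·t^{k+1} + q·q^{-2k} t^k (1 - t)`.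
(This computes the Markov operator `A_ω` on the subalgebra generated by `γ*γ`.) -/
theorem stmt16 {A : Type*} [Ring A] [Algebra ℂ A] [StarRing A] [StarModule ℂ A]
    (q : ℝ) (hq : q ≠ 0) (α γ : A)
    (h1 : star α * α + star γ * γ = 1)
    (h2 : α * star α + (q : ℂ) ^ 2 • (star γ * γ) = 1)
    (h3 : star γ * γ = γ * star γ)
    (h4 : α * γ = (q : ℂ) • (γ * α))
    (h5 : α * star γ = (q : ℂ) • (star γ * α)) :
    ∀ k : ℕ,
      (q : ℂ)⁻¹ • (α * (star γ * γ) ^ k * star α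
            + (q : ℂ) ^ 2 • (star γ * (star γ * γ) ^ k * γ))
        + (q : ℂ) • (γ * (star γ * γ) ^ k * star γ
            + star α * (star γ * γ) ^ k * α)
      = ((q : ℂ)⁻¹ * ((q : ℂ) ^ 2) ^ k)
            • ((star γ * γ) ^ k * (1 - (q : ℂ) ^ 2 • (star γ * γ)))
        + (2 * (q : ℂ)) • (star γ * γ) ^ (k + 1)
        + ((q : ℂ) * ((q : ℂ) ^ (2 * k))⁻¹)
            • ((star γ * γ) ^ k * (1 - star γ * γ)) :=
  stmt16_general q hq α γ h1 h2 h3 h4 h5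
end

section
/- Let n ≥ 2 be an integer and 0<q<1. Define d_i = (1−q^2) q^{2(n−i)} / (1−q^{2n}) for i = 1,…,n. Then: (a) Σ_{i=1}^n d_i = 1; (b) for every i, q·d_i + (q−q^{−1})·Σ_{j<i} d_j = q^{2n−1}(1−q^2)/(1−q^{2n}), i.e., this expression is constant in i; (c) the expression q·d_i + (q−q^{−1})·Σ_{j>i} d_j is NOT constant in i (there exist i, i' for which the two values differ). -/
/-!
The weights form a geometric progression `d i = q² d (i+1)` with total mass `1`. Along such a
progression the lower expression `q d i + (q - q⁻¹) Σ_{j<i} d j` does not change when `i` grows,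
because the new term `(q - q⁻¹) d i` exactly compensates `q d (i+1) - q d i`. Adding the lower
and upper expressions gives `(q - q⁻¹) Σ_j d j + (q + q⁻¹) d i`, so the upper expression differs
from a constant by `(q + q⁻¹) d i`, which takes different values at `i = 1` and `i = n`.
-/

open Finset

lemma sum_Icc_one_sub_eq_sum_range {M : Type*} [AddCommMonoid M] (f : ℕ → M) (n : ℕ) :
    ∑ i ∈ Icc 1 n, f (n - i) = ∑ k ∈ range n, f k :=
  sum_nbij' (n - ·) (n - ·) (by intro a ha; simp at ha ⊢; omega)
    (by intro a ha; simp at ha ⊢; omega) (by intro a ha; simp at ha ⊢; omega)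
    (by intro a ha; simp at ha ⊢; omega) fun _ _ => rfl

lemma sum_Icc_div_mul_pow_sub {K : Type*} [Field K] (x : K) (n : ℕ) (hx : 1 - x ^ n ≠ 0) :
    ∑ i ∈ Icc 1 n, (1 - x) / (1 - x ^ n) * x ^ (n - i) = 1 := by
  rw [← mul_sum, sum_Icc_one_sub_eq_sum_range (x ^ ·), mul_comm, ← mul_div_assoc,
    geom_sum_mul_neg, div_self hx]

lemma sum_Icc_eq_sum_Ico_add_add_sum_Ioc {M : Type*} [AddCommMonoid M] (f : ℕ → M) {n i : ℕ}
    (hi : i ∈ Icc 1 n) :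
    ∑ j ∈ Icc 1 n, f j = ∑ j ∈ Ico 1 i, f j + (f i + ∑ j ∈ Ioc i n, f j) := by
  obtain ⟨h1, hin⟩ := mem_Icc.1 hi
  rw [← Ico_add_one_right_eq_Icc, ← sum_Ico_consecutive f h1 (by omega : i ≤ n + 1),
    Ico_add_one_right_eq_Icc, Icc_eq_cons_Ioc hin, sum_cons]

lemma eq_mul_succ_of_eq_mul_pow_sub {R : Type*} [CommMonoid R] {d : ℕ → R} {c x : R} {n : ℕ}
    (hd : ∀ i ∈ Icc 1 n, d i = c * x ^ (n - i)) {i : ℕ} (h1 : 1 ≤ i) (hin : i < n) :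
    d i = x * d (i + 1) := by
  rw [hd i (by simp; omega), hd (i + 1) (by simp; omega),
    show n - i = n - (i + 1) + 1 by omega, pow_succ]
  ac_rfl

section

variable {K : Type*} [Field K]

def lowerSum (q : K) (d : ℕ → K) (i : ℕ) : K := q * d i + (q - q⁻¹) * ∑ j ∈ Ico 1 i, d j

def upperSum (q : K) (d : ℕ → K) (n i : ℕ) : K := q * d i + (q - q⁻¹) * ∑ j ∈ Ioc i n, d j

lemma lowerSum_eq_of_eq_sq_mul_succ {q : K} (hq : q ≠ 0) {d : ℕ → K} {n : ℕ}
    (hratio : ∀ i, 1 ≤ i → i < n → d i = q ^ 2 * d (i + 1)) {i : ℕ} (hi : i ∈ Icc 1 n) :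
    lowerSum q d i = q * d 1 := by
  obtain ⟨h1, hin⟩ := mem_Icc.1 hi
  clear hi
  induction i, h1 using Nat.le_induction with
  | base => simp [lowerSum]
  | succ i h1 ih =>
    specialize ih (by omega)
    rw [lowerSum] at ih ⊢
    rw [sum_Ico_succ_top h1]
    linear_combination ih - q⁻¹ * hratio i h1 hin - q * d (i + 1) * mul_inv_cancel₀ hq

lemma upperSum_add_lowerSum (q : K) (d : ℕ → K) {n i : ℕ} (hi : i ∈ Icc 1 n) :
    upperSum q d n i + lowerSum q d i = (q - q⁻¹) * ∑ j ∈ Icc 1 n, d j + (q + q⁻¹) * d i := by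
  rw [upperSum, lowerSum, sum_Icc_eq_sum_Ico_add_add_sum_Ioc d hi]
  ring

lemma upperSum_ne_of_lowerSum_eq {q : K} (hq : q + q⁻¹ ≠ 0) {d : ℕ → K} {n i i' : ℕ}
    (hi : i ∈ Icc 1 n) (hi' : i' ∈ Icc 1 n) (hlower : lowerSum q d i = lowerSum q d i')
    (hne : d i ≠ d i') : upperSum q d n i ≠ upperSum q d n i' := by
  intro h
  have hsub : (q + q⁻¹) * (d i - d i') = 0 := by
    linear_combination h + hlower - upperSum_add_lowerSum q d hi + upperSum_add_lowerSum q d hi'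
  exact hne (sub_eq_zero.1 ((mul_eq_zero.1 hsub).resolve_left hq))

end

/-- Let `n ≥ 2` be an integer and `0 < q < 1`. Define
`d_i = (1-q²) q^{2(n-i)} / (1-q^{2n})` for `i = 1, …, n`. Then:
(a) `Σ_{i=1}^n d_i = 1`;
(b) for every `i`, `q·d_i + (q-q⁻¹)·Σ_{j<i} d_j = q^{2n-1}(1-q²)/(1-q^{2n})`, i.e.
this expression is constant in `i`;
(c) the expression `q·d_i + (q-q⁻¹)·Σ_{j>i} d_j` is NOT constant in `i`: there exist
`i, i'` in `{1, …, n}` for which the two values differ. -/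
theorem stmt18 (n : ℕ) (hn : 2 ≤ n) (q : ℝ) (hq0 : 0 < q) (hq1 : q < 1)
    (d : ℕ → ℝ)
    (hd : ∀ i ∈ Finset.Icc 1 n, d i = (1 - q ^ 2) * q ^ (2 * (n - i)) / (1 - q ^ (2 * n))) :
    (∑ i ∈ Finset.Icc 1 n, d i = 1) ∧
    (∀ i ∈ Finset.Icc 1 n,
      q * d i + (q - q⁻¹) * ∑ j ∈ Finset.Ico 1 i, d j
        = q ^ (2 * n - 1) * (1 - q ^ 2) / (1 - q ^ (2 * n))) ∧
    (∃ i ∈ Finset.Icc 1 n, ∃ i' ∈ Finset.Icc 1 n,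
      q * d i + (q - q⁻¹) * ∑ j ∈ Finset.Ioc i n, d j
        ≠ q * d i' + (q - q⁻¹) * ∑ j ∈ Finset.Ioc i' n, d j) := by
  have hx1 : q ^ 2 < 1 := pow_lt_one₀ hq0.le hq1 two_ne_zero
  have hxn : (q ^ 2) ^ n < 1 := pow_lt_one₀ (by positivity) hx1 (by omega)
  set c := (1 - q ^ 2) / (1 - (q ^ 2) ^ n)
  have hd' : ∀ i ∈ Icc 1 n, d i = c * (q ^ 2) ^ (n - i) := fun i hi => by
    rw [hd i hi, pow_mul, pow_mul, mul_div_right_comm]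
  have hlower : ∀ i ∈ Icc 1 n, lowerSum q d i = q * d 1 := fun i hi =>
    lowerSum_eq_of_eq_sq_mul_succ hq0.ne' (fun _ => eq_mul_succ_of_eq_mul_pow_sub hd') hi
  have h1 : 1 ∈ Icc 1 n := by simp; omega
  have hn' : n ∈ Icc 1 n := by simp; omega
  refine ⟨?_, fun i hi => (hlower i hi).trans ?_, 1, h1, n, hn',
    upperSum_ne_of_lowerSum_eq (by positivity) h1 hn' ((hlower 1 h1).trans (hlower n hn').symm) ?_⟩
  · rw [sum_congr rfl hd']
    exact sum_Icc_div_mul_pow_sub _ n (sub_ne_zero.2 hxn.ne')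
  · rw [hd' 1 h1, show 2 * n - 1 = 2 * (n - 1) + 1 by omega, pow_add, pow_mul]
    ring
  · have hc : 0 < c := div_pos (by linarith) (by linarith)
    rw [hd' 1 h1, hd' n hn', Nat.sub_self, pow_zero, mul_one]
    exact (mul_lt_of_lt_one_right hc (pow_lt_one₀ (by positivity) hx1 (by omega))).ne
end
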